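/- arXiv:2310.16516 — 8 statements merged into one kernel-verified Lean document; each statement's English description precedes it below -/
import Mathlib

section
/- For any two real numbers a and b with 1 < q ≤ 2 and p = q/(q-1), we have |sgn(a)|a|^{q-1} - sgn(b)|b|^{q-1}|^p ≤ 2^{p-q} |a-b|^q. -/
open Real

lemma real_rpow_add_le {s : ℝ} (hs0 : 0 ≤ s) (hs1 : s ≤ 1) {x y : ℝ} (hx : 0 ≤ x) (hy : 0 ≤ y) :
    (x + y) ^ s ≤ x ^ s + y ^ s := by
  lift x to NNReal using hx
  lift y to NNReal using hy
  have h := NNReal.rpow_add_le_add_rpow x y hs0 hs1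
  exact_mod_cast h

lemma real_rpow_sub_le {s : ℝ} (hs0 : 0 ≤ s) (hs1 : s ≤ 1) {x y : ℝ} (hy : 0 ≤ y) (hxy : y ≤ x) :
    x ^ s - y ^ s ≤ (x - y) ^ s := by
  have h : x ^ s ≤ y ^ s + (x - y) ^ s := by
    have h2 := real_rpow_add_le hs0 hs1 hy (sub_nonneg.2 hxy)
    simpa using h2
  linarith

lemma real_rpow_add_concave {s : ℝ} (hs0 : 0 < s) (hs1 : s ≤ 1) {x y : ℝ} (hx : 0 ≤ x)
    (hy : 0 ≤ y) : x ^ s + y ^ s ≤ 2 ^ (1 - s) * (x + y) ^ s := by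
  lift x to NNReal using hx
  lift y to NNReal using hy
  have hp : (1 : ℝ) ≤ 1 / s := by
    rw [le_div_iff₀ hs0]; linarith
  have h := NNReal.rpow_add_le_mul_rpow_add_rpow (x ^ s) (y ^ s) hp
  have hxs : (x ^ s) ^ (1 / s) = x := by
    rw [← NNReal.rpow_mul, mul_one_div, div_self hs0.ne', NNReal.rpow_one]
  have hys : (y ^ s) ^ (1 / s) = y := by
    rw [← NNReal.rpow_mul, mul_one_div, div_self hs0.ne', NNReal.rpow_one]
  rw [hxs, hys] at h
  have h2 := NNReal.rpow_le_rpow h hs0.le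
  rw [← NNReal.rpow_mul, one_div, inv_mul_cancel₀ hs0.ne', NNReal.rpow_one,
    NNReal.mul_rpow, ← NNReal.rpow_mul] at h2
  have he : (s⁻¹ - 1) * s = 1 - s := by field_simp
  rw [he] at h2
  exact_mod_cast h2

lemma phi_of_nonneg {s : ℝ} (hs0 : 0 < s) {x : ℝ} (hx : 0 ≤ x) :
    Real.sign x * |x| ^ s = x ^ s := by
  rcases hx.eq_or_lt with h | h
  · simp [← h, Real.sign_zero, Real.zero_rpow hs0.ne']
  · rw [Real.sign_of_pos h, abs_of_pos h, one_mul]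

lemma phi_of_nonpos {s : ℝ} (hs0 : 0 < s) {x : ℝ} (hx : x ≤ 0) :
    Real.sign x * |x| ^ s = -(-x) ^ s := by
  have := phi_of_nonneg hs0 (neg_nonneg.2 hx)
  rw [Real.sign_neg, abs_neg] at this
  linarith

lemma phi_sub_le {s : ℝ} (hs0 : 0 < s) (hs1 : s ≤ 1) (a b : ℝ) :
    |Real.sign a * |a| ^ s - Real.sign b * |b| ^ s| ≤ 2 ^ (1 - s) * |a - b| ^ s := by
  have h2 : (1 : ℝ) ≤ 2 ^ (1 - s) := by
    have := Real.rpow_le_rpow_of_exponent_le one_le_two (by linarith : (0 : ℝ) ≤ 1 - s)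
    simpa using this
  wlog hab : b ≤ a with H
  · have h := H hs0 hs1 b a h2 (le_of_not_ge hab)
    rwa [abs_sub_comm, abs_sub_comm b a] at h
  have habs : |a - b| = a - b := abs_of_nonneg (by linarith)
  by_cases hb : 0 ≤ b
  · -- both nonneg
    have ha : 0 ≤ a := hb.trans hab
    rw [phi_of_nonneg hs0 ha, phi_of_nonneg hs0 hb, habs]
    have hmono : b ^ s ≤ a ^ s := Real.rpow_le_rpow hb hab hs0.le
    rw [abs_of_nonneg (by linarith)]
    have h3 := real_rpow_sub_le hs0.le hs1 hb hab
    have h4 : 0 ≤ (a - b) ^ s := Real.rpow_nonneg (by linarith) s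
    nlinarith
  · push_neg at hb
    by_cases ha : 0 ≤ a
    · -- b < 0 ≤ a
      rw [phi_of_nonneg hs0 ha, phi_of_nonpos hs0 hb.le, habs, sub_neg_eq_add]
      have h3 : 0 ≤ a ^ s := Real.rpow_nonneg ha s
      have h4 : 0 ≤ (-b) ^ s := Real.rpow_nonneg (by linarith) s
      rw [abs_of_nonneg (by linarith)]
      have h5 := real_rpow_add_concave hs0 hs1 ha (neg_nonneg.2 hb.le)
      have he : a + -b = a - b := by ring
      rwa [he] at h5
    · -- both nonpos
      push_neg at ha
      rw [phi_of_nonpos hs0 ha.le, phi_of_nonpos hs0 hb.le, habs]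
      have hab' : -a ≤ -b := by linarith
      have ha' : 0 ≤ -a := by linarith
      have hmono : (-a) ^ s ≤ (-b) ^ s := Real.rpow_le_rpow ha' hab' hs0.le
      have he : -(-a) ^ s - -(-b) ^ s = (-b) ^ s - (-a) ^ s := by ring
      rw [he, abs_of_nonneg (by linarith)]
      have h3 := real_rpow_sub_le hs0.le hs1 ha' hab'
      have he2 : -b - -a = a - b := by ring
      rw [he2] at h3
      have h4 : 0 ≤ (a - b) ^ s := Real.rpow_nonneg (by linarith) s
      nlinarith

theorem stmt0 (q p : ℝ) (hq1 : 1 < q) (hq2 : q ≤ 2) (hp : p = q / (q - 1)) (a b : ℝ) :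
    |Real.sign a * |a| ^ (q - 1) - Real.sign b * |b| ^ (q - 1)| ^ p
      ≤ 2 ^ (p - q) * |a - b| ^ q := by
  have hs0 : 0 < q - 1 := by linarith
  have hs1 : q - 1 ≤ 1 := by linarith
  have key := phi_sub_le hs0 hs1 a b
  have hp_pos : 0 < p := by rw [hp]; positivity
  have h1 : |Real.sign a * |a| ^ (q - 1) - Real.sign b * |b| ^ (q - 1)| ^ p
      ≤ (2 ^ (1 - (q - 1)) * |a - b| ^ (q - 1)) ^ p :=
    Real.rpow_le_rpow (abs_nonneg _) key hp_pos.le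
  have h2 : (2 ^ (1 - (q - 1)) * |a - b| ^ (q - 1)) ^ p = 2 ^ (p - q) * |a - b| ^ q := by
    rw [Real.mul_rpow (Real.rpow_nonneg (by norm_num) _) (Real.rpow_nonneg (abs_nonneg _) _),
      ← Real.rpow_mul (by norm_num : (0:ℝ) ≤ 2),
      ← Real.rpow_mul (abs_nonneg _)]
    · congr 1
      · congr 1
        rw [hp]; field_simp
      · congr 1
        rw [hp]; field_simp
  linarith [h1, h2.le, h2.ge]
end

section
/- Let q > 2, p = q/(q-1), c1 = 3^{-p}, and c2 = (q-1)^p · ((4/3)^{1/(q-1)} / ((4/3)^{1/(q-1)} - 1))^{q-p}. Then for all b > 0, |1 - b^{q-1}|^p ≤ c1 + c2 |1 - b|^q. -/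
open Real

set_option maxHeartbeats 1600000 in
theorem stmt4 (q p c1 c2 : ℝ) (hq : 2 < q) (hp : p = q / (q - 1))
    (hc1 : c1 = 3 ^ (-p))
    (hc2 : c2 = (q - 1) ^ p *
      ((4 / 3 : ℝ) ^ (1 / (q - 1)) / ((4 / 3 : ℝ) ^ (1 / (q - 1)) - 1)) ^ (q - p)) :
    ∀ b : ℝ, 0 < b → |1 - b ^ (q - 1)| ^ p ≤ c1 + c2 * |1 - b| ^ q := by
  intro b hb
  have hq1 : (1:ℝ) < q - 1 := by linarith
  have hq1' : (0:ℝ) < q - 1 := by linarith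
  have hp_pos : 0 < p := by rw [hp]; positivity
  have hpq : p * (q - 1) = q := by rw [hp]; field_simp
  have hqp : q - p = p * (q - 2) := by nlinarith [hpq]
  have hqp_pos : 0 < q - p := by nlinarith [hp_pos]
  set r : ℝ := (4/3 : ℝ) ^ (1/(q-1)) with hr_def
  clear_value r
  have hr1 : 1 < r := by
    rw [hr_def]
    exact Real.one_lt_rpow_iff_of_pos (by norm_num) |>.mpr (Or.inl ⟨by norm_num, by positivity⟩)
  have hr0 : 0 < r := by linarith
  have hr1' : 0 < r - 1 := by linarith
  have hrpow : r ^ (q-1) = 4/3 := by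
    rw [hr_def, ← Real.rpow_mul (by norm_num), one_div,
      inv_mul_cancel₀ (ne_of_gt hq1'), Real.rpow_one]
  have hc2nonneg : 0 ≤ c2 := by
    rw [hc2]
    exact mul_nonneg (Real.rpow_nonneg hq1'.le _) (Real.rpow_nonneg (by positivity) _)
  have hc1pos : 0 < c1 := by rw [hc1]; positivity
  set A : ℝ := b ^ (q-1) with hA_def
  clear_value A
  have hA0 : 0 < A := by rw [hA_def]; exact Real.rpow_pos_of_pos hb _
  by_cases h1 : |1 - A| ≤ 1/3
  · -- near 1: LHS ≤ (1/3)^p = c1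
    have h2 : |1 - A| ^ p ≤ (1/3 : ℝ) ^ p :=
      Real.rpow_le_rpow (abs_nonneg _) h1 hp_pos.le
    have h3 : ((1:ℝ)/3) ^ p = c1 := by
      rw [hc1, one_div, ← Real.rpow_neg_one (3:ℝ), ← Real.rpow_mul (by norm_num)]
      ring_nf
    have h4 : 0 ≤ c2 * |1 - b| ^ q :=
      mul_nonneg hc2nonneg (Real.rpow_nonneg (abs_nonneg _) _)
    linarith
  · push_neg at h1
    rcases le_or_gt 1 A with hA1 | hA1
    · -- A > 4/3, so b ≥ r
      have hA43 : 4/3 < A := by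
        rw [abs_of_nonpos (by linarith)] at h1; linarith
      have hbr : r ≤ b := by
        by_contra hbr
        push_neg at hbr
        have := Real.rpow_lt_rpow hb.le hbr hq1'
        rw [← hA_def, hrpow] at this
        linarith
      have hb1 : 1 < b := lt_of_lt_of_le hr1 hbr
      -- Bernoulli with 1/b : (1/b)^(q-1) ≥ 1 + (q-1)*(1/b - 1)
      have hbern : 1 + (q-1) * (1/b - 1) ≤ (1/b) ^ (q-1) := by
        have h0b : (0:ℝ) < 1/b := by positivity
        have h := one_add_mul_self_le_rpow_one_add (s := 1/b - 1)
          (by linarith) (p := q - 1) hq1.le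
        rwa [show (1:ℝ) + (1/b - 1) = 1/b by ring] at h
      have hinv : (1/b) ^ (q-1) = A⁻¹ := by
        rw [one_div, Real.inv_rpow hb.le, ← hA_def]
      rw [hinv] at hbern
      -- multiply by A: A + (q-1)*A*(1/b-1) ≤ 1, i.e. A - 1 ≤ (q-1)*(A/b)*(b-1)
      have hmul : A * (1 + (q-1) * (1/b - 1)) ≤ 1 := by
        have := mul_le_mul_of_nonneg_left hbern hA0.le
        rwa [mul_inv_cancel₀ (ne_of_gt hA0)] at this
      have hkey : A - 1 ≤ (q-1) * (A/b) * (b-1) := by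
        have e2 : A/b * b = A := div_mul_cancel₀ A (ne_of_gt hb)
        have h3 : A * (1 + (q-1)*(1/b-1)) = A + (q-1)*(A/b - A) := by ring
        rw [h3] at hmul
        have h4 : (q-1)*(A/b)*(b-1) = (q-1)*(A/b*b - A/b) := by ring
        rw [h4, e2]
        nlinarith [hmul]
      have hAb : A / b = b ^ (q-2) := by
        rw [hA_def, show q - 2 = (q-1) - 1 by ring, Real.rpow_sub hb (q-1) 1, Real.rpow_one]
      rw [hAb] at hkey
      -- raise to power p
      have hB0 : (0:ℝ) ≤ b ^ (q-2) := Real.rpow_nonneg hb.le _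
      have hb1' : 0 < b - 1 := by linarith
      have hstep1 : (A - 1) ^ p ≤ ((q-1) * b ^ (q-2) * (b-1)) ^ p :=
        Real.rpow_le_rpow (by linarith) hkey hp_pos.le
      have hexp : ((q-1) * b ^ (q-2) * (b-1)) ^ p
          = (q-1) ^ p * (b ^ (q-2)) ^ p * (b-1) ^ p := by
        rw [Real.mul_rpow (by positivity) hb1'.le,
          Real.mul_rpow hq1'.le hB0]
      have hbp : (b ^ (q-2)) ^ p = b ^ (q - p) := by
        rw [← Real.rpow_mul hb.le, hqp, mul_comm]
      -- b ≤ r/(r-1) * (b-1)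
      have hble : b ≤ r/(r-1) * (b-1) := by
        rw [div_mul_eq_mul_div, le_div_iff₀ hr1']
        nlinarith
      have hstep2 : b ^ (q-p) ≤ (r/(r-1)) ^ (q-p) * (b-1) ^ (q-p) := by
        calc b ^ (q-p) ≤ (r/(r-1) * (b-1)) ^ (q-p) :=
              Real.rpow_le_rpow hb.le hble hqp_pos.le
          _ = (r/(r-1)) ^ (q-p) * (b-1) ^ (q-p) :=
              Real.mul_rpow (by positivity) hb1'.le
      have hcomb : (b-1) ^ (q-p) * (b-1) ^ p = (b-1) ^ q := by
        rw [← Real.rpow_add hb1']; ring_nf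
      have habs1 : |1 - A| = A - 1 := by rw [abs_of_nonpos (by linarith)]; ring
      have habs2 : |1 - b| = b - 1 := by rw [abs_of_nonpos (by linarith)]; ring
      rw [habs1, habs2, hc2]
      have hfinal : (A - 1) ^ p ≤ (q-1) ^ p * (r/(r-1)) ^ (q-p) * (b-1) ^ q := by
        calc (A - 1) ^ p ≤ (q-1) ^ p * (b ^ (q-2)) ^ p * (b-1) ^ p := by
              rw [← hexp]; exact hstep1
          _ = (q-1) ^ p * b ^ (q-p) * (b-1) ^ p := by rw [hbp]
          _ ≤ (q-1) ^ p * ((r/(r-1)) ^ (q-p) * (b-1) ^ (q-p)) * (b-1) ^ p := by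
              have hn1 : (0:ℝ) ≤ (q-1) ^ p := Real.rpow_nonneg hq1'.le _
              have hn2 : (0:ℝ) ≤ (b-1) ^ p := Real.rpow_nonneg hb1'.le _
              exact mul_le_mul_of_nonneg_right
                (mul_le_mul_of_nonneg_left hstep2 hn1) hn2
          _ = (q-1) ^ p * (r/(r-1)) ^ (q-p) * ((b-1) ^ (q-p) * (b-1) ^ p) := by ring
          _ = (q-1) ^ p * (r/(r-1)) ^ (q-p) * (b-1) ^ q := by rw [hcomb]
      linarith
    · -- A < 1, and |1-A| > 1/3 so A < 2/3
      have hA23 : A < 2/3 := by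
        rw [abs_of_nonneg (by linarith)] at h1; linarith
      have hblt1 : b < 1 := by
        by_contra hb1
        push_neg at hb1
        have : (1:ℝ) ^ (q-1) ≤ b ^ (q-1) := Real.rpow_le_rpow (by norm_num) hb1 hq1'.le
        rw [Real.one_rpow, ← hA_def] at this
        linarith
      have hbinvr : b ≤ 1/r := by
        by_contra hbr
        push_neg at hbr
        have h34 : ((1:ℝ)/r) ^ (q-1) = 3/4 := by
          rw [one_div, Real.inv_rpow hr0.le, hrpow]; norm_num
        have := Real.rpow_lt_rpow (by positivity) hbr hq1'
        rw [h34, ← hA_def] at this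
        linarith
      -- Bernoulli: b^(q-1) ≥ 1 + (q-1)(b-1)
      have hbern : 1 + (q-1) * (b-1) ≤ A := by
        have := one_add_mul_self_le_rpow_one_add (s := b - 1) (by linarith) (p := q-1) hq1.le
        simpa [hA_def] using this
      have hkey : 1 - A ≤ (q-1) * (1-b) := by
        have h5 : (q-1)*(b-1) = -((q-1)*(1-b)) := by ring
        rw [h5] at hbern; linarith
      have h1b : 0 < 1 - b := by linarith
      have hstep1 : (1 - A) ^ p ≤ (q-1) ^ p * (1-b) ^ p := by
        calc (1 - A) ^ p ≤ ((q-1) * (1-b)) ^ p :=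
              Real.rpow_le_rpow (by linarith) hkey hp_pos.le
          _ = (q-1) ^ p * (1-b) ^ p := Real.mul_rpow hq1'.le h1b.le
      -- 1 ≤ r/(r-1) * (1-b)
      have hble : 1 ≤ r/(r-1) * (1-b) := by
        rw [div_mul_eq_mul_div, le_div_iff₀ hr1']
        have : r * b ≤ 1 := by
          have := mul_le_mul_of_nonneg_left hbinvr hr0.le
          rwa [mul_one_div, div_self (ne_of_gt hr0)] at this
        have h6 : r * (1-b) = r - r * b := by ring
        rw [h6]; linarith
      have hstep2 : (1:ℝ) ≤ (r/(r-1)) ^ (q-p) * (1-b) ^ (q-p) := by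
        calc (1:ℝ) = 1 ^ (q-p) := (Real.one_rpow _).symm
          _ ≤ (r/(r-1) * (1-b)) ^ (q-p) :=
              Real.rpow_le_rpow (by norm_num) hble hqp_pos.le
          _ = (r/(r-1)) ^ (q-p) * (1-b) ^ (q-p) := Real.mul_rpow (by positivity) h1b.le
      have hcomb : (1-b) ^ p * ((1-b) ^ (q-p)) = (1-b) ^ q := by
        rw [← Real.rpow_add h1b]; ring_nf
      have habs1 : |1 - A| = 1 - A := abs_of_nonneg (by linarith)
      have habs2 : |1 - b| = 1 - b := abs_of_nonneg (by linarith)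
      rw [habs1, habs2, hc2]
      have hfinal : (1 - A) ^ p ≤ (q-1) ^ p * (r/(r-1)) ^ (q-p) * (1-b) ^ q := by
        calc (1 - A) ^ p ≤ (q-1) ^ p * (1-b) ^ p := hstep1
          _ = (q-1) ^ p * (1-b) ^ p * 1 := by ring
          _ ≤ (q-1) ^ p * (1-b) ^ p * ((r/(r-1)) ^ (q-p) * (1-b) ^ (q-p)) := by
              have hn1 : (0:ℝ) ≤ (q-1) ^ p := Real.rpow_nonneg hq1'.le _
              have hn2 : (0:ℝ) ≤ (1-b) ^ p := Real.rpow_nonneg h1b.le _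
              exact mul_le_mul_of_nonneg_left hstep2 (mul_nonneg hn1 hn2)
          _ = (q-1) ^ p * (r/(r-1)) ^ (q-p) * ((1-b) ^ p * (1-b) ^ (q-p)) := by ring
          _ = (q-1) ^ p * (r/(r-1)) ^ (q-p) * (1-b) ^ q := by rw [hcomb]
      linarith
end

section
/- Let q > 2, p = q/(q-1). There exist nonnegative constants c1 = 3^{-p} and a finite c2 (depending only on q) such that for all real a, b: |sgn(a)|a|^{q-1} - sgn(b)|b|^{q-1}|^p ≤ c1 |a|^q + c2 |a - b|^q. -/
open Real

lemma two_pow_split {u v e : ℝ} (hu : 0 ≤ u) (hv : 0 ≤ v) (he : 0 ≤ e) :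
    (u + v) ^ e ≤ 2 ^ e * (u ^ e + v ^ e) := by
  have h1 : u + v ≤ 2 * max u v := by
    rcases le_total u v with h | h
    · simpa [max_eq_right h, two_mul] using add_le_add_right h v
    · simp [max_eq_left h, two_mul]; linarith
  have h2 : (u + v) ^ e ≤ (2 * max u v) ^ e :=
    Real.rpow_le_rpow (by positivity) h1 he
  have h3 : (2 * max u v) ^ e = 2 ^ e * (max u v) ^ e :=
    Real.mul_rpow (by norm_num) (le_max_of_le_left hu)
  have h4 : (max u v) ^ e ≤ u ^ e + v ^ e := by
    rcases le_total u v with h | h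
    · rw [max_eq_right h]; exact le_add_of_nonneg_left (Real.rpow_nonneg hu e)
    · rw [max_eq_left h]; exact le_add_of_nonneg_right (Real.rpow_nonneg hv e)
  calc (u+v)^e ≤ 2^e * (max u v)^e := by rw [← h3]; exact h2
    _ ≤ 2^e * (u^e + v^e) := by
        apply mul_le_mul_of_nonneg_left h4 (Real.rpow_nonneg (by norm_num) e)

lemma tangent {q x y : ℝ} (hq : 2 < q) (hy : 0 ≤ y) (hxy : y ≤ x) :
    x ^ (q-1) - y ^ (q-1) ≤ (q-1) * x ^ (q-2) * (x - y) := by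
  have hx : 0 ≤ x := hy.trans hxy
  rcases hx.eq_or_lt with h | hx
  · have hy0 : y = 0 := le_antisymm (h ▸ hxy) hy
    subst hy0; rw [← h]
    rw [Real.zero_rpow (by linarith)]
    simp
  · have hs : (-1 : ℝ) ≤ y / x - 1 := by
      have : 0 ≤ y / x := div_nonneg hy hx.le
      linarith
    have hb := one_add_mul_self_le_rpow_one_add hs (p := q - 1) (by linarith)
    have hxy' : (1 : ℝ) + (y / x - 1) = y / x := by ring
    rw [hxy'] at hb
    have hpow : (y / x) ^ (q-1) = y ^ (q-1) / x ^ (q-1) :=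
      Real.div_rpow hy hx.le _
    rw [hpow] at hb
    have hxq : (0:ℝ) < x ^ (q-1) := Real.rpow_pos_of_pos hx _
    have hb2 := mul_le_mul_of_nonneg_left hb hxq.le
    rw [mul_div_cancel₀ _ hxq.ne'] at hb2
    have key : x ^ (q-1) * (y / x - 1) = x ^ (q-2) * (y - x) := by
      have h2 : x ^ (q-1) = x ^ (q-2) * x := by
        rw [← Real.rpow_add_one hx.ne' (q-2)]; ring_nf
      rw [h2]; field_simp
    nlinarith [hb2, key]

lemma absdiff {q x y : ℝ} (hq : 2 < q) (hx : 0 ≤ x) (hy : 0 ≤ y) :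
    |x ^ (q-1) - y ^ (q-1)| ≤ (q-1) * (max x y) ^ (q-2) * |x - y| := by
  rcases le_total y x with h | h
  · rw [max_eq_left h, abs_of_nonneg (sub_nonneg.2 (Real.rpow_le_rpow hy h (by linarith))),
      abs_of_nonneg (sub_nonneg.2 h)]
    exact tangent hq hy h
  · rw [max_eq_right h, abs_sub_comm, abs_sub_comm x y,
      abs_of_nonneg (sub_nonneg.2 (Real.rpow_le_rpow hx h (by linarith))),
      abs_of_nonneg (sub_nonneg.2 h)]
    exact tangent hq hx h

lemma sign_rpow_of_nonneg {q x : ℝ} (hq : 2 < q) (hx : 0 ≤ x) :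
    Real.sign x * |x| ^ (q-1) = x ^ (q-1) := by
  rcases hx.eq_or_lt with h | h
  · rw [← h]; simp [Real.sign_zero, Real.zero_rpow (show q - 1 ≠ 0 by linarith)]
  · rw [Real.sign_of_pos h, abs_of_pos h, one_mul]

lemma sign_rpow_neg {q x : ℝ} :
    Real.sign (-x) * |(-x)| ^ (q-1) = -(Real.sign x * |x| ^ (q-1)) := by
  rw [Real.sign_neg, abs_neg]; ring

lemma superadd {r x y : ℝ} (hr : 1 ≤ r) (hx : 0 ≤ x) (hy : 0 ≤ y) :
    x ^ r + y ^ r ≤ (x + y) ^ r := by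
  have hr0 : r ≠ 0 := by linarith
  have e1 : ∀ z : ℝ, 0 ≤ z → z ^ r = z * z ^ (r - 1) := by
    intro z hz
    have h := Real.rpow_add' hz (show (1:ℝ) + (r-1) ≠ 0 by simpa using hr0)
    rw [Real.rpow_one] at h
    have h2 : (1:ℝ) + (r-1) = r := by ring
    rw [h2] at h
    exact h
  rw [e1 x hx, e1 y hy, e1 (x+y) (by linarith)]
  have hx1 : x ^ (r-1) ≤ (x+y) ^ (r-1) :=
    Real.rpow_le_rpow hx (by linarith) (by linarith)
  have hy1 : y ^ (r-1) ≤ (x+y) ^ (r-1) :=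
    Real.rpow_le_rpow hy (by linarith) (by linarith)
  nlinarith [mul_le_mul_of_nonneg_left hx1 hx, mul_le_mul_of_nonneg_left hy1 hy]

lemma keybound {q : ℝ} (hq : 2 < q) (a b : ℝ) :
    |Real.sign a * |a| ^ (q-1) - Real.sign b * |b| ^ (q-1)|
      ≤ |a - b| ^ (q-1) + (q-1) * (max |a| |b|) ^ (q-2) * |a - b| := by
  have hM : ∀ x y : ℝ, (0:ℝ) ≤ (max |x| |y|) ^ (q-2) :=
    fun x y => Real.rpow_nonneg (le_max_of_le_left (abs_nonneg x)) _
  have nn : ∀ a b : ℝ, 0 ≤ a → 0 ≤ b →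
      |Real.sign a * |a| ^ (q-1) - Real.sign b * |b| ^ (q-1)|
        ≤ |a - b| ^ (q-1) + (q-1) * (max |a| |b|) ^ (q-2) * |a - b| := by
    intro a b ha hb
    rw [sign_rpow_of_nonneg hq ha, sign_rpow_of_nonneg hq hb]
    have h := absdiff hq ha hb
    rw [abs_of_nonneg ha, abs_of_nonneg hb]
    have h0 : (0:ℝ) ≤ |a-b| ^ (q-1) := Real.rpow_nonneg (abs_nonneg _) _
    linarith
  have mixed : ∀ a b : ℝ, 0 ≤ a → b ≤ 0 →
      |Real.sign a * |a| ^ (q-1) - Real.sign b * |b| ^ (q-1)|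
        ≤ |a - b| ^ (q-1) + (q-1) * (max |a| |b|) ^ (q-2) * |a - b| := by
    intro a b ha hb
    have hnb : 0 ≤ -b := by linarith
    have e1 : Real.sign a * |a| ^ (q-1) = a ^ (q-1) := sign_rpow_of_nonneg hq ha
    have e2 : Real.sign b * |b| ^ (q-1) = -((-b) ^ (q-1)) := by
      have h := sign_rpow_neg (q := q) (x := b)
      rw [sign_rpow_of_nonneg hq hnb] at h
      linarith
    rw [e1, e2, sub_neg_eq_add]
    have h1 : a ^ (q-1) + (-b) ^ (q-1) ≤ (a + -b) ^ (q-1) :=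
      superadd (by linarith) ha hnb
    have habs : |a ^ (q-1) + (-b) ^ (q-1)| = a ^ (q-1) + (-b) ^ (q-1) :=
      abs_of_nonneg (by positivity)
    have hab : |a - b| = a + -b := by rw [abs_of_nonneg (by linarith)]; ring
    rw [habs, hab]
    have h3 : (0:ℝ) ≤ (q-1) * (max |a| |b|) ^ (q-2) * (a + -b) :=
      mul_nonneg (mul_nonneg (by linarith) (hM a b)) (by linarith)
    linarith
  rcases le_total 0 a with ha | ha <;> rcases le_total 0 b with hb | hb
  · exact nn a b ha hb
  · exact mixed a b ha hb
  · rw [abs_sub_comm (Real.sign a * |a| ^ (q-1)), abs_sub_comm a b, max_comm]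
    exact mixed b a hb ha
  · have h := nn (-a) (-b) (by linarith) (by linarith)
    rw [sign_rpow_neg, sign_rpow_neg, abs_neg, abs_neg,
      show -a - -b = -(a-b) by ring, abs_neg,
      show -(Real.sign a * |a| ^ (q-1)) - -(Real.sign b * |b| ^ (q-1))
        = -(Real.sign a * |a| ^ (q-1) - Real.sign b * |b| ^ (q-1)) by ring, abs_neg] at h
    exact h

-- weighted Young via case split
lemma youngish {e p μ A d : ℝ} (he : 0 < e) (hp : 0 < p) (hμ : 0 < μ)
    (hA : 0 ≤ A) (hd : 0 ≤ d) :
    A ^ e * d ^ p ≤ μ ^ p * A ^ (e + p) + μ ^ (-e) * d ^ (e + p) := by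
  have hep : e + p ≠ 0 := by linarith
  rcases le_total d (μ * A) with h | h
  · have h1 : d ^ p ≤ (μ * A) ^ p := Real.rpow_le_rpow hd h hp.le
    have h2 : (μ * A) ^ p = μ ^ p * A ^ p := Real.mul_rpow hμ.le hA
    have h3 : A ^ e * d ^ p ≤ A ^ e * (μ ^ p * A ^ p) := by
      apply mul_le_mul_of_nonneg_left (h2 ▸ h1) (Real.rpow_nonneg hA _)
    have h4 : A ^ e * (μ ^ p * A ^ p) = μ ^ p * A ^ (e + p) := by
      rw [Real.rpow_add' hA hep]; ring
    have h5 : (0:ℝ) ≤ μ ^ (-e) * d ^ (e + p) :=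
      mul_nonneg (Real.rpow_nonneg hμ.le _) (Real.rpow_nonneg hd _)
    linarith [h3.trans_eq h4]
  · have hA' : A ≤ μ⁻¹ * d := by
      rw [le_inv_mul_iff₀ hμ]; linarith
    have h1 : A ^ e ≤ (μ⁻¹ * d) ^ e := Real.rpow_le_rpow hA hA' he.le
    have h2 : (μ⁻¹ * d) ^ e = μ ^ (-e) * d ^ e := by
      rw [Real.mul_rpow (by positivity) hd, ← Real.rpow_neg_one μ, ← Real.rpow_mul hμ.le]
      ring_nf
    have h3 : A ^ e * d ^ p ≤ μ ^ (-e) * d ^ e * d ^ p := by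
      apply mul_le_mul_of_nonneg_right (h2 ▸ h1) (Real.rpow_nonneg hd _)
    have h4 : μ ^ (-e) * d ^ e * d ^ p = μ ^ (-e) * d ^ (e + p) := by
      rw [Real.rpow_add' hd hep]; ring
    have h5 : (0:ℝ) ≤ μ ^ p * A ^ (e + p) :=
      mul_nonneg (Real.rpow_nonneg hμ.le _) (Real.rpow_nonneg hA _)
    linarith [h3.trans_eq h4]


theorem stmt5 (q p : ℝ) (hq : 2 < q) (hp : p = q / (q - 1)) :
    ∃ c2 : ℝ, 0 ≤ c2 ∧ ∀ a b : ℝ,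
      |Real.sign a * |a| ^ (q - 1) - Real.sign b * |b| ^ (q - 1)| ^ p
        ≤ 3 ^ (-p) * |a| ^ q + c2 * |a - b| ^ q := by
  have hq1 : (0:ℝ) < q - 1 := by linarith
  have hp0 : 0 < p := by rw [hp]; positivity
  have hp1 : 1 ≤ p := by rw [hp, le_div_iff₀ hq1]; linarith
  have hqp : (q - 1) * p = q := by rw [hp]; field_simp
  set e : ℝ := (q - 2) * p with he
  have he0 : 0 < e := mul_pos (by linarith) hp0
  have hep : e + p = q := by rw [he]; linear_combination hqp
  set K : ℝ := 2 ^ p * ((q-1) ^ p * 2 ^ e) with hK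
  have hKpos : 0 < K := by
    have h1 : (0:ℝ) < 2 ^ p := Real.rpow_pos_of_pos (by norm_num) _
    have h2 : (0:ℝ) < (q-1) ^ p := Real.rpow_pos_of_pos hq1 _
    have h3 : (0:ℝ) < 2 ^ e := Real.rpow_pos_of_pos (by norm_num) _
    positivity
  have h3p : (0:ℝ) < 3 ^ (-p) := Real.rpow_pos_of_pos (by norm_num) _
  set μ : ℝ := (3 ^ (-p) / K) ^ (1/p) with hμdef
  have hμ : 0 < μ := Real.rpow_pos_of_pos (by positivity) _
  have hKμ : K * μ ^ p = 3 ^ (-p) := by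
    rw [hμdef, ← Real.rpow_mul (by positivity), one_div, inv_mul_cancel₀ hp0.ne',
      Real.rpow_one, mul_div_cancel₀ _ hKpos.ne']
  refine ⟨2 ^ p + K + K * μ ^ (-e), ?_, ?_⟩
  · have h1 : (0:ℝ) ≤ 2 ^ p := Real.rpow_nonneg (by norm_num) _
    have h2 : (0:ℝ) ≤ μ ^ (-e) := Real.rpow_nonneg hμ.le _
    nlinarith [hKpos]
  intro a b
  have hA : (0:ℝ) ≤ |a| := abs_nonneg a
  have hd : (0:ℝ) ≤ |a - b| := abs_nonneg _
  set A : ℝ := |a| with hAdef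
  set d : ℝ := |a - b| with hddef
  set M : ℝ := max |a| |b| with hMdef
  have hMn : (0:ℝ) ≤ M := le_trans hA (le_max_left _ _)
  have h0 := keybound hq a b
  have hT1 : (0:ℝ) ≤ d ^ (q-1) := Real.rpow_nonneg hd _
  have hT2 : (0:ℝ) ≤ (q-1) * M ^ (q-2) * d :=
    mul_nonneg (mul_nonneg hq1.le (Real.rpow_nonneg hMn _)) hd
  have hMAd : M ≤ A + d := by
    rw [hMdef, hAdef, hddef]
    apply max_le (le_add_of_nonneg_right hd)
    calc |b| = |a - (a - b)| := by ring_nf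
      _ ≤ |a| + |a - b| := abs_sub _ _
  have heq1 : (d ^ (q-1)) ^ p = d ^ q := by
    rw [← Real.rpow_mul hd, hqp]
  have heq2 : ((q-1) * M ^ (q-2) * d) ^ p = (q-1) ^ p * (M ^ e * d ^ p) := by
    rw [Real.mul_rpow (mul_nonneg hq1.le (Real.rpow_nonneg hMn _)) hd,
      Real.mul_rpow hq1.le (Real.rpow_nonneg hMn _), ← Real.rpow_mul hMn, ← he]
    ring
  have hM2 : M ^ e ≤ 2 ^ e * (A ^ e + d ^ e) :=
    (Real.rpow_le_rpow hMn hMAd he0.le).trans (two_pow_split hA hd he0.le)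
  have hde : d ^ e * d ^ p = d ^ q := by
    rw [← Real.rpow_add' hd (by rw [hep]; linarith), hep]
  have hyoung := youngish he0 hp0 hμ hA hd
  rw [hep] at hyoung
  have hdpn : (0:ℝ) ≤ d ^ p := Real.rpow_nonneg hd _
  have hAen : (0:ℝ) ≤ A ^ e := Real.rpow_nonneg hA _
  have hden : (0:ℝ) ≤ d ^ e := Real.rpow_nonneg hd _
  have h2pn : (0:ℝ) < (2:ℝ) ^ p := Real.rpow_pos_of_pos (by norm_num) _
  have hq1pn : (0:ℝ) < (q-1) ^ p := Real.rpow_pos_of_pos hq1 _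
  have h2en : (0:ℝ) < (2:ℝ) ^ e := Real.rpow_pos_of_pos (by norm_num) _
  calc |Real.sign a * |a| ^ (q - 1) - Real.sign b * |b| ^ (q - 1)| ^ p
      ≤ (d ^ (q-1) + (q-1) * M ^ (q-2) * d) ^ p :=
        Real.rpow_le_rpow (abs_nonneg _) h0 hp0.le
    _ ≤ 2 ^ p * ((d ^ (q-1)) ^ p + ((q-1) * M ^ (q-2) * d) ^ p) :=
        two_pow_split hT1 hT2 hp0.le
    _ = 2 ^ p * d ^ q + 2 ^ p * ((q-1) ^ p * (M ^ e * d ^ p)) := by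
        rw [heq1, heq2]; ring
    _ ≤ 2 ^ p * d ^ q + 2 ^ p * ((q-1) ^ p * (2 ^ e * (A ^ e + d ^ e) * d ^ p)) := by
        have h := mul_le_mul_of_nonneg_right hM2 hdpn
        have h2 := mul_le_mul_of_nonneg_left h hq1pn.le
        have h3 := mul_le_mul_of_nonneg_left h2 h2pn.le
        linarith
    _ = 2 ^ p * d ^ q + K * (A ^ e * d ^ p) + K * (d ^ e * d ^ p) := by
        rw [hK]; ring
    _ ≤ 2 ^ p * d ^ q + K * (μ ^ p * A ^ q + μ ^ (-e) * d ^ q) + K * d ^ q := by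
        rw [hde]
        have := mul_le_mul_of_nonneg_left hyoung hKpos.le
        linarith
    _ = 3 ^ (-p) * A ^ q + (2 ^ p + K + K * μ ^ (-e)) * d ^ q := by
        have h : K * (μ ^ p * A ^ q) = 3 ^ (-p) * A ^ q := by rw [← hKμ]; ring
        linarith
end

section
/- For any two real d×d matrices A and B, each having all eigenvalues with positive real part (in particular det A > 0 and det B > 0, and both invertible), it holds that |log det A - log det B| ≤ d · ‖A - B‖₂ · max{‖A⁻¹‖₂, ‖B⁻¹‖₂}, where ‖·‖₂ denotes the spectral (operator) norm. -/
open Matrix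

open Polynomial



lemma evalCharpolyAux {n : Type*} [Fintype n] [DecidableEq n] {K : Type*} [CommRing K]
    (M : Matrix n n K) (μ : K) :
    M.charpoly.eval μ = (Matrix.scalar n μ - M).det := by
  rw [Matrix.charpoly, _root_.eval_det, matPolyEquiv_charmatrix]
  simp

lemma mem_spectrum_of_root {n : Type*} [Fintype n] [DecidableEq n] {K : Type*} [Field K]
    (M : Matrix n n K) (μ : K) (h : M.charpoly.eval μ = 0) : μ ∈ spectrum K M := by
  rw [spectrum.mem_iff]
  intro hu
  rw [Matrix.isUnit_iff_isUnit_det, isUnit_iff_ne_zero] at hu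
  apply hu
  rw [evalCharpolyAux] at h
  convert h using 3
  rfl

lemma multiset_bound (s : Multiset ℂ) (C : ℝ) (hC : 0 ≤ C) (h : ∀ z ∈ s, ‖z‖ ≤ C) :
    ‖(s.map (fun z => 1 + z)).prod‖ ≤ Real.exp (Multiset.card s * C) := by
  induction s using Multiset.induction with
  | empty => simp
  | cons a s ih =>
    rw [Multiset.map_cons, Multiset.prod_cons, Multiset.card_cons]
    have ha : ‖a‖ ≤ C := h a (Multiset.mem_cons_self a s)
    have ihs := ih (fun z hz => h z (Multiset.mem_cons_of_mem hz))
    calc ‖(1 + a) * (Multiset.map (fun z => 1 + z) s).prod‖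
        = ‖1 + a‖ * ‖(Multiset.map (fun z => 1 + z) s).prod‖ := norm_mul _ _
      _ ≤ Real.exp C * Real.exp (Multiset.card s * C) := by
          refine mul_le_mul ?_ ihs (norm_nonneg _) (Real.exp_nonneg _)
          calc ‖1 + a‖ ≤ ‖(1 : ℂ)‖ + ‖a‖ := norm_add_le _ _
            _ ≤ 1 + C := by rw [norm_one]; linarith
            _ ≤ Real.exp C := by have := Real.add_one_le_exp C; linarith
      _ = Real.exp ((Multiset.card s + 1 : ℕ) * C) := by rw [← Real.exp_add]; push_cast; ring_nf


lemma norm_complexify (d : ℕ) (M : Matrix (Fin d) (Fin d) ℝ) :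
    ‖Matrix.toEuclideanCLM (𝕜 := ℂ) (M.map (algebraMap ℝ ℂ))‖ ≤
      ‖Matrix.toEuclideanCLM (𝕜 := ℝ) M‖ := by
  refine ContinuousLinearMap.opNorm_le_bound _ (norm_nonneg _) fun v => ?_
  classical
  set T := Matrix.toEuclideanCLM (𝕜 := ℝ) M with hT
  set S := Matrix.toEuclideanCLM (𝕜 := ℂ) (M.map (algebraMap ℝ ℂ)) with hS
  set x : EuclideanSpace ℝ (Fin d) := WithLp.toLp 2 (fun i => (v i).re) with hx
  set y : EuclideanSpace ℝ (Fin d) := WithLp.toLp 2 (fun i => (v i).im) with hy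
  have hre : ∀ i, ((S v) i).re = (T x) i := by
    intro i
    show ((M.map (algebraMap ℝ ℂ)).mulVec v.ofLp i).re = M.mulVec x.ofLp i
    simp [Matrix.mulVec, dotProduct, Complex.mul_re, hx]
  have him : ∀ i, ((S v) i).im = (T y) i := by
    intro i
    show ((M.map (algebraMap ℝ ℂ)).mulVec v.ofLp i).im = M.mulVec y.ofLp i
    simp [Matrix.mulVec, dotProduct, Complex.mul_im, hy]
  have hSv : ‖S v‖ ^ 2 = ‖T x‖ ^ 2 + ‖T y‖ ^ 2 := by
    rw [EuclideanSpace.norm_eq, EuclideanSpace.norm_eq, EuclideanSpace.norm_eq,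
      Real.sq_sqrt (by positivity), Real.sq_sqrt (by positivity), Real.sq_sqrt (by positivity),
      ← Finset.sum_add_distrib]
    refine Finset.sum_congr rfl fun i _ => ?_
    rw [← hre i, ← him i]
    rw [Complex.sq_norm, Complex.normSq_apply]
    simp [Real.norm_eq_abs, sq_abs]
    ring
  have hv : ‖v‖ ^ 2 = ‖x‖ ^ 2 + ‖y‖ ^ 2 := by
    rw [EuclideanSpace.norm_eq, EuclideanSpace.norm_eq, EuclideanSpace.norm_eq,
      Real.sq_sqrt (by positivity), Real.sq_sqrt (by positivity), Real.sq_sqrt (by positivity),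
      ← Finset.sum_add_distrib]
    refine Finset.sum_congr rfl fun i _ => ?_
    rw [Complex.sq_norm, Complex.normSq_apply]
    simp [Real.norm_eq_abs, sq_abs, hx, hy]
    ring
  have hsq : ‖S v‖ ^ 2 ≤ (‖T‖ * ‖v‖) ^ 2 := by
    have h1 : ‖T x‖ ≤ ‖T‖ * ‖x‖ := T.le_opNorm x
    have h2 : ‖T y‖ ≤ ‖T‖ * ‖y‖ := T.le_opNorm y
    have hb : (‖T‖ * ‖v‖) ^ 2 = (‖T‖*‖x‖)^2 + (‖T‖*‖y‖)^2 := by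
      rw [mul_pow, hv]; ring
    rw [hSv, hb]
    gcongr <;> positivity
  have h := Real.sqrt_le_sqrt hsq
  rwa [Real.sqrt_sq (norm_nonneg _), Real.sqrt_sq (by positivity)] at h


lemma onesided (d : ℕ) (A B : Matrix (Fin d) (Fin d) ℝ)
    (hAdet : 0 < A.det) (hBdet : 0 < B.det) :
    Real.log A.det - Real.log B.det ≤
      d * (‖Matrix.toEuclideanCLM (𝕜 := ℝ) (A - B)‖ * ‖Matrix.toEuclideanCLM (𝕜 := ℝ) B⁻¹‖) := by
  classical
  rcases Nat.eq_zero_or_pos d with rfl | hd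
  · simp only [Matrix.det_isEmpty, Real.log_one, sub_self, Nat.cast_zero, zero_mul]; exact le_refl 0
  haveI : Nonempty (Fin d) := ⟨⟨0, hd⟩⟩
  set M := (A - B) * B⁻¹ with hM
  have hBunit : IsUnit B.det := isUnit_iff_ne_zero.mpr hBdet.ne'
  have hone : (1 : Matrix (Fin d) (Fin d) ℝ) + M = A * B⁻¹ := by
    rw [hM, sub_mul, Matrix.mul_nonsing_inv B hBunit]
    abel
  have hdet1M : (1 + M).det = A.det * B.det⁻¹ := by
    rw [hone, det_mul, Matrix.det_nonsing_inv, Ring.inverse_eq_inv']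
  have hpos : 0 < (1 + M).det := by
    rw [hdet1M]; positivity
  have hlog : Real.log A.det - Real.log B.det = Real.log ((1 + M).det) := by
    rw [hdet1M, Real.log_mul hAdet.ne' (inv_ne_zero hBdet.ne'), Real.log_inv]; ring
  set f : ℝ →+* ℂ := algebraMap ℝ ℂ with hf
  set M' := M.map f with hM'
  have hmap1 : ((1 : Matrix (Fin d) (Fin d) ℝ) + M).map f = 1 + M' := by
    have : ((1 : Matrix (Fin d) (Fin d) ℝ) + M).map f = f.mapMatrix (1 + M) := rfl
    rw [this, map_add, _root_.map_one]
    rfl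
  have hmapdet : ((1 : Matrix (Fin d) (Fin d) ℂ) + M').det = ((1 + M).det : ℂ) := by
    rw [← hmap1, show ((1 + M).map ⇑f) = f.mapMatrix (1 + M) from rfl, ← RingHom.map_det]
    rfl
  set p := M'.charpoly with hp
  have hmonic : p.Monic := M'.charpoly_monic
  have hsplits : p.Splits := IsAlgClosed.splits p
  have hcard : Multiset.card p.roots = d := by
    rw [Polynomial.splits_iff_card_roots.mp hsplits, hp, M'.charpoly_natDegree_eq_dim,
      Fintype.card_fin]
  -- det (1 + M') = ∏ (1 + root)
  have hdet2 : ((1 : Matrix (Fin d) (Fin d) ℂ) + M').det = (p.roots.map (fun a => 1 + a)).prod := by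
    have h3 : p.eval (-1) = (Matrix.scalar (Fin d) (-1 : ℂ) - M').det := evalCharpolyAux M' (-1)
    have h4 : Matrix.scalar (Fin d) (-1 : ℂ) - M' = -(1 + M') := by
      rw [_root_.map_neg, _root_.map_one]; abel
    have h5 : p.eval (-1) = (-1 : ℂ) ^ d * (1 + M').det := by
      rw [h3, h4, Matrix.det_neg, Fintype.card_fin]
    have h6 : p.eval (-1) = (p.roots.map (fun a => (-1 : ℂ) - a)).prod := by
      conv_lhs => rw [hsplits.eq_prod_roots_of_monic hmonic]
      rw [Polynomial.eval_multiset_prod, Multiset.map_map]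
      simp
    have h7 : (p.roots.map (fun a => (-1 : ℂ) - a)).prod
        = (-1 : ℂ) ^ d * (p.roots.map (fun a => 1 + a)).prod := by
      have : (p.roots.map (fun a => (-1 : ℂ) - a)) = (p.roots.map (fun a => (-1) * (1 + a))) := by
        congr 1; funext a; ring
      rw [this]
      rw [show (fun a : ℂ => (-1) * (1 + a)) = fun a : ℂ => (fun _ => (-1 : ℂ)) a * (1 + a) from rfl]
      rw [Multiset.prod_map_mul, Multiset.map_const', Multiset.prod_replicate, hcard]
    have h8 := h5.symm.trans (h6.trans h7)
    have hne : ((-1 : ℂ) ^ d) ≠ 0 := by simp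
    field_simp at h8
    exact h8
  set Cval := ‖Matrix.toEuclideanCLM (𝕜 := ℂ) M'‖ with hCval
  have hroot : ∀ z ∈ p.roots, ‖z‖ ≤ Cval := by
    intro z hz
    have hev : p.eval z = 0 := Polynomial.isRoot_of_mem_roots hz
    have hspec : z ∈ spectrum ℂ M' := mem_spectrum_of_root M' z hev
    have hspec2 : z ∈ spectrum ℂ (Matrix.toEuclideanCLM (𝕜 := ℂ) M') := by
      rw [AlgEquiv.spectrum_eq (Matrix.toEuclideanCLM (n := Fin d) (𝕜 := ℂ)) M']
      exact hspec
    exact spectrum.norm_le_norm_of_mem hspec2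
  have hCnn : (0 : ℝ) ≤ Cval := norm_nonneg _
  have hbound : (1 + M).det ≤ Real.exp (d * Cval) := by
    have h9 : (1 + M).det = ‖((1 + M').det)‖ := by
      rw [hmapdet, Complex.norm_real, Real.norm_eq_abs, abs_of_pos hpos]
    rw [h9, hdet2]
    have h10 := multiset_bound p.roots Cval hCnn hroot
    rwa [hcard] at h10
  have hlog2 : Real.log ((1 + M).det) ≤ d * Cval :=
    (Real.log_le_iff_le_exp hpos).mpr hbound
  have hfinal : Cval ≤ ‖Matrix.toEuclideanCLM (𝕜 := ℝ) (A - B)‖ *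
      ‖Matrix.toEuclideanCLM (𝕜 := ℝ) B⁻¹‖ := by
    have h10 : Cval ≤ ‖Matrix.toEuclideanCLM (𝕜 := ℝ) M‖ := norm_complexify d M
    refine h10.trans ?_
    rw [hM, _root_.map_mul]
    exact norm_mul_le _ _
  rw [hlog]
  refine hlog2.trans ?_
  exact mul_le_mul_of_nonneg_left hfinal (by positivity)

theorem stmt6 (d : ℕ) (A B : Matrix (Fin d) (Fin d) ℝ)
    (hA : ∀ μ ∈ spectrum ℂ (A.map (algebraMap ℝ ℂ)), 0 < μ.re)
    (hB : ∀ μ ∈ spectrum ℂ (B.map (algebraMap ℝ ℂ)), 0 < μ.re)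
    (hAdet : 0 < A.det) (hBdet : 0 < B.det)
    (hAinv : IsUnit A.det) (hBinv : IsUnit B.det) :
    |Real.log A.det - Real.log B.det| ≤
      d * ‖Matrix.toEuclideanCLM (𝕜 := ℝ) (A - B)‖ *
        max ‖Matrix.toEuclideanCLM (𝕜 := ℝ) A⁻¹‖ ‖Matrix.toEuclideanCLM (𝕜 := ℝ) B⁻¹‖ := by
  have h1 := onesided d A B hAdet hBdet
  have h2 := onesided d B A hBdet hAdet
  have hBA : ‖Matrix.toEuclideanCLM (𝕜 := ℝ) (B - A)‖ =
      ‖Matrix.toEuclideanCLM (𝕜 := ℝ) (A - B)‖ := by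
    rw [show B - A = -(A - B) from (neg_sub A B).symm, _root_.map_neg, norm_neg]
  rw [abs_sub_le_iff]
  constructor
  · refine h1.trans ?_
    rw [mul_assoc]
    refine mul_le_mul_of_nonneg_left ?_ (by positivity)
    exact mul_le_mul_of_nonneg_left (le_max_right _ _) (norm_nonneg _)
  · refine h2.trans ?_
    rw [hBA, mul_assoc]
    refine mul_le_mul_of_nonneg_left ?_ (by positivity)
    exact mul_le_mul_of_nonneg_left (le_max_left _ _) (norm_nonneg _)
end

section
/- Let p > 1, q = p/(p-1), and define for fixed a ∈ ℝ the function L(b) = a·b - |b|^p/p. Then L is maximized at b* = sgn(a)|a|^{q-1} with maximum value |a|^q/q, and for every ε₁ > 0 there exists a finite ε₂ (depending only on ε₁ and p) such that for all a, b ∈ ℝ: |b - sgn(a)|a|^{q-1}|^p ≤ ε₁ |a|^q/q + ε₂ (|a|^q/q - a·b + |b|^p/p). Moreover, if p ≥ 2 one may take ε₁ = 0. -/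
open Real

lemma st10_conj {p q : ℝ} (hp : 1 < p) (hq : q = p / (p - 1)) : p.HolderConjugate q :=
  (Real.holderConjugate_iff_eq_conjExponent hp).2 hq

lemma st10_caseA {p q : ℝ} (hp : 1 < p) (hq : q = p / (p - 1)) {s b : ℝ} (hs : 0 ≤ s)
    (hb : b ≤ 0) :
    |b - s| ^ p ≤ (2 ^ p * max p q) * (s ^ p / q - s ^ (p - 1) * b + |b| ^ p / p) := by
  have hpq := st10_conj hp hq
  have hp0 : (0:ℝ) < p := by linarith
  have hq1 : 1 < q := hpq.symm.lt
  set m : ℝ := max s (-b) with hm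
  have hm0 : 0 ≤ m := le_trans hs (le_max_left _ _)
  have h1 : |b - s| ≤ 2 * m := by
    have h2 : |b - s| = s - b := by
      rw [abs_sub_comm, abs_of_nonneg (by linarith)]
    have := le_max_left s (-b); have := le_max_right s (-b)
    linarith
  have h2 : |b - s| ^ p ≤ 2 ^ p * m ^ p := by
    calc |b - s| ^ p ≤ (2 * m) ^ p :=
          Real.rpow_le_rpow (abs_nonneg _) h1 hp0.le
      _ = 2 ^ p * m ^ p := Real.mul_rpow (by norm_num) hm0
  have hsp : (0:ℝ) ≤ s ^ p := Real.rpow_nonneg hs _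
  have hbp : (0:ℝ) ≤ |b| ^ p := Real.rpow_nonneg (abs_nonneg b) _
  have h3 : m ^ p ≤ s ^ p + |b| ^ p := by
    rcases max_cases s (-b) with ⟨he, _⟩ | ⟨he, _⟩ <;> rw [hm, he]
    · linarith
    · rw [← abs_of_nonpos hb]; linarith
  have h4 : s ^ p + |b| ^ p ≤ max p q * (s ^ p / q + |b| ^ p / p) := by
    have e1 : s ^ p = q * (s ^ p / q) := by field_simp
    have e2 : |b| ^ p = p * (|b| ^ p / p) := by field_simp
    have l1 : q * (s ^ p / q) ≤ max p q * (s ^ p / q) :=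
      mul_le_mul_of_nonneg_right (le_max_right _ _) (by positivity)
    have l2 : p * (|b| ^ p / p) ≤ max p q * (|b| ^ p / p) :=
      mul_le_mul_of_nonneg_right (le_max_left _ _) (by positivity)
    calc s ^ p + |b| ^ p = q * (s ^ p / q) + p * (|b| ^ p / p) := by rw [← e1, ← e2]
      _ ≤ max p q * (s ^ p / q) + max p q * (|b| ^ p / p) := by linarith
      _ = max p q * (s ^ p / q + |b| ^ p / p) := by ring
  have h5 : s ^ p / q + |b| ^ p / p ≤ s ^ p / q - s ^ (p - 1) * b + |b| ^ p / p := by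
    have : 0 ≤ s ^ (p - 1) * (-b) := mul_nonneg (Real.rpow_nonneg hs _) (by linarith)
    nlinarith
  have hmaxpq : (0:ℝ) ≤ max p q := le_trans hp0.le (le_max_left _ _)
  have h2p : (0:ℝ) ≤ (2:ℝ) ^ p := Real.rpow_nonneg (by norm_num) _
  calc |b - s| ^ p ≤ 2 ^ p * m ^ p := h2
    _ ≤ 2 ^ p * (max p q * (s ^ p / q + |b| ^ p / p)) := by
        exact mul_le_mul_of_nonneg_left (le_trans h3 h4) h2p
    _ = (2 ^ p * max p q) * (s ^ p / q + |b| ^ p / p) := by ring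
    _ ≤ (2 ^ p * max p q) * (s ^ p / q - s ^ (p - 1) * b + |b| ^ p / p) :=
        mul_le_mul_of_nonneg_left h5 (by positivity)

lemma st10_caseB1 {p q : ℝ} (hp : 1 < p) (hq : q = p / (p - 1)) {s b : ℝ} (hs : 0 ≤ s)
    (hb : 0 < b) (hKs : (2 * p) ^ (p - 1)⁻¹ * s ≤ b) :
    |b - s| ^ p ≤ (2 * p) * (s ^ p / q - s ^ (p - 1) * b + |b| ^ p / p) := by
  have hpq := st10_conj hp hq
  have hp0 : (0:ℝ) < p := by linarith
  have hp1 : (0:ℝ) < p - 1 := by linarith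
  set K : ℝ := (2 * p) ^ (p - 1)⁻¹ with hK
  have hK1 : 1 ≤ K := Real.one_le_rpow (by linarith) (by positivity)
  have hKp : K ^ (p - 1) = 2 * p := by
    rw [hK, ← Real.rpow_mul (by positivity), inv_mul_cancel₀ (ne_of_gt hp1), Real.rpow_one]
  have hKpos : 0 < K := by linarith
  have hsb : s ≤ b := le_trans (le_mul_of_one_le_left hs hK1) hKs
  -- s^(p-1) * b ≤ b^p / (2p)
  have hsdiv : s ≤ b / K := (le_div_iff₀ hKpos).2 (by linarith [hKs])
  have h1 : s ^ (p - 1) ≤ (b / K) ^ (p - 1) :=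
    Real.rpow_le_rpow hs hsdiv hp1.le
  have h2 : (b / K) ^ (p - 1) = b ^ (p - 1) / (2 * p) := by
    rw [Real.div_rpow hb.le hKpos.le, hKp]
  have h3 : b ^ (p - 1) * b = b ^ p := by
    rw [← Real.rpow_add_one hb.ne' (p - 1)]; ring_nf
  have h4 : s ^ (p - 1) * b ≤ b ^ p / (2 * p) := by
    calc s ^ (p - 1) * b ≤ (b ^ (p - 1) / (2 * p)) * b := by
          rw [← h2]; exact mul_le_mul_of_nonneg_right h1 hb.le
      _ = b ^ p / (2 * p) := by rw [← h3]; ring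
  have hsp : (0:ℝ) ≤ s ^ p := Real.rpow_nonneg hs _
  have habs : |b| = b := abs_of_pos hb
  have hD : b ^ p / (2 * p) ≤ s ^ p / q - s ^ (p - 1) * b + |b| ^ p / p := by
    have hq0 : 0 < q := hpq.symm.pos
    have : 0 ≤ s ^ p / q := by positivity
    have e : |b| ^ p = b ^ p := by rw [habs]
    rw [e]
    have : b ^ p / p - b ^ p / (2 * p) = b ^ p / (2 * p) := by field_simp; ring
    nlinarith
  have h5 : |b - s| ^ p ≤ b ^ p := by
    have : |b - s| ≤ b := by rw [abs_of_nonneg (by linarith)]; linarith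
    exact Real.rpow_le_rpow (abs_nonneg _) this hp0.le
  calc |b - s| ^ p ≤ b ^ p := h5
    _ = (2 * p) * (b ^ p / (2 * p)) := by field_simp
    _ ≤ (2 * p) * (s ^ p / q - s ^ (p - 1) * b + |b| ^ p / p) :=
        mul_le_mul_of_nonneg_left hD (by positivity)

lemma st10_bern' (p : ℝ) (hp : 1 < p) {c x : ℝ} (hc : 0 < c) (hx : 0 ≤ x) :
    c ^ p + p * (c ^ (p - 1) * (x - c)) ≤ x ^ p := by
  have hu : -1 ≤ x / c - 1 := by
    have : 0 ≤ x / c := div_nonneg hx hc.le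
    linarith
  have hb := one_add_mul_self_le_rpow_one_add hu hp.le
  have hxc : (1 + (x / c - 1)) = x / c := by ring
  rw [hxc, Real.div_rpow hx hc.le] at hb
  have hc1 : c ^ p = c ^ (p - 1) * c := by
    rw [← Real.rpow_add_one hc.ne' (p - 1)]; ring_nf
  have hcp : (0:ℝ) < c ^ p := Real.rpow_pos_of_pos hc p
  have key := mul_le_mul_of_nonneg_left hb hcp.le
  rw [mul_div_cancel₀ _ (by positivity : c ^ p ≠ 0)] at key
  calc c ^ p + p * (c ^ (p - 1) * (x - c))
      = c ^ p * (1 + p * (x / c - 1)) := by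
        rw [hc1]; field_simp
    _ ≤ x ^ p := key

lemma st10_gap_eq' {p q : ℝ} (hp : 1 < p) (hq : q = p / (p - 1)) {s : ℝ} (hs : 0 < s) (u : ℝ)
    (hu : -1 ≤ u) :
    s ^ p / q - s ^ (p - 1) * (s * (1 + u)) + |s * (1 + u)| ^ p / p
      = s ^ p * (((1 + u) ^ p - 1 - p * u) / p) := by
  have hpq := st10_conj hp hq
  have h1q : (1:ℝ)/q = 1 - 1/p := by
    have := hpq.inv_add_inv_eq_one
    have hp0 : p ≠ 0 := by positivity
    field_simp at this ⊢
    linarith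
  have h1 : |s * (1 + u)| ^ p = s ^ p * (1 + u) ^ p := by
    rw [abs_of_nonneg (by nlinarith : (0:ℝ) ≤ s * (1 + u)), Real.mul_rpow hs.le (by linarith)]
  have h2 : s ^ (p - 1) * s = s ^ p := by
    rw [← Real.rpow_add_one hs.ne' (p - 1)]; ring_nf
  have hp0 : p ≠ 0 := by positivity
  have hq0 : q ≠ 0 := hpq.symm.ne_zero
  rw [h1]
  have e1 : s ^ p / q = s ^ p * (1 - 1/p) := by
    rw [div_eq_mul_inv, ← one_div, h1q]
  rw [e1]
  have h3 : s ^ (p - 1) * (s * (1 + u)) = s ^ p * (1 + u) := by rw [← h2]; ring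
  rw [h3]
  field_simp
  ring

lemma st10_caseB2 {p q : ℝ} (hp : 1 < p) (hq : q = p / (p - 1)) {η : ℝ} (hη0 : 0 < η)
    (hη1 : η ≤ 1/2) {s b : ℝ} (hs : 0 < s) (hb : 0 ≤ b) (hcond : η * s ≤ |b - s|) :
    min (((1 + η) ^ p - 1 - p * η) / p) (((1 - η) ^ p - 1 + p * η) / p) * s ^ p
      ≤ s ^ p / q - s ^ (p - 1) * b + |b| ^ p / p := by
  have hp0 : (0:ℝ) < p := by linarith
  have hp1 : (0:ℝ) < p - 1 := by linarith
  have hsp : (0:ℝ) ≤ s ^ p := Real.rpow_nonneg hs.le _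
  have hsp1 : (0:ℝ) ≤ s ^ (p - 1) := Real.rpow_nonneg hs.le _
  have habs : |b| ^ p = b ^ p := by rw [abs_of_nonneg hb]
  rw [habs]
  rcases le_or_gt s b with hsb | hsb
  · -- b ≥ (1+η) s
    have hbc : (1 + η) * s ≤ b := by
      rw [abs_of_nonneg (by linarith)] at hcond; nlinarith
    set c : ℝ := (1 + η) * s with hc
    have hcpos : 0 < c := by positivity
    have hbern := st10_bern' p hp hcpos hb
    have hcc : c ^ (p - 1) = (1 + η) ^ (p - 1) * s ^ (p - 1) :=
      Real.mul_rpow (by linarith) hs.le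
    have hge1 : (1:ℝ) ≤ (1 + η) ^ (p - 1) := Real.one_le_rpow (by linarith) hp1.le
    have hkey : s ^ (p - 1) * (b - c) ≤ c ^ (p - 1) * (b - c) := by
      apply mul_le_mul_of_nonneg_right _ (by linarith)
      rw [hcc]; nlinarith
    have step : s ^ p / q - s ^ (p - 1) * c + c ^ p / p
        ≤ s ^ p / q - s ^ (p - 1) * b + b ^ p / p := by
      have hb2 : c ^ p / p + (c ^ (p - 1) * (b - c)) ≤ b ^ p / p := by
        have := hbern
        have hpne : p ≠ 0 := by positivity
        calc c ^ p / p + c ^ (p - 1) * (b - c)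
            = (c ^ p + p * (c ^ (p - 1) * (b - c))) / p := by field_simp
          _ ≤ b ^ p / p := by apply div_le_div_of_nonneg_right _ hp0.le; exact this
      nlinarith
    have geq := st10_gap_eq' hp hq hs η (by linarith)
    have habsc : |s * (1 + η)| ^ p = c ^ p := by
      rw [abs_of_nonneg (by positivity), hc]; ring_nf
    rw [habsc] at geq
    have hcs : s ^ (p - 1) * (s * (1 + η)) = s ^ (p - 1) * c := by rw [hc]; ring
    rw [hcs] at geq
    calc min (((1 + η) ^ p - 1 - p * η) / p) (((1 - η) ^ p - 1 + p * η) / p) * s ^ p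
        ≤ (((1 + η) ^ p - 1 - p * η) / p) * s ^ p :=
          mul_le_mul_of_nonneg_right (min_le_left _ _) hsp
      _ = s ^ p / q - s ^ (p - 1) * c + c ^ p / p := by rw [geq]; ring
      _ ≤ _ := step
  · -- b ≤ (1-η) s
    have hbc : b ≤ (1 - η) * s := by
      rw [abs_of_nonpos (by linarith)] at hcond; nlinarith
    set c : ℝ := (1 - η) * s with hc
    have hcpos : 0 < c := by nlinarith
    have hbern := st10_bern' p hp hcpos hb
    have hcc : c ^ (p - 1) = (1 - η) ^ (p - 1) * s ^ (p - 1) :=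
      Real.mul_rpow (by linarith) hs.le
    have hle1 : (1 - η) ^ (p - 1) ≤ 1 :=
      Real.rpow_le_one (by linarith) (by linarith) hp1.le
    have hkey : s ^ (p - 1) * (b - c) ≤ c ^ (p - 1) * (b - c) := by
      have hbc' : b - c ≤ 0 := by linarith
      rw [hcc]
      have key : 0 ≤ (1 - (1 - η) ^ (p - 1)) * s ^ (p - 1) * (-(b - c)) :=
        mul_nonneg (mul_nonneg (by linarith) hsp1) (by linarith)
      nlinarith [key]
    have step : s ^ p / q - s ^ (p - 1) * c + c ^ p / p
        ≤ s ^ p / q - s ^ (p - 1) * b + b ^ p / p := by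
      have hb2 : c ^ p / p + (c ^ (p - 1) * (b - c)) ≤ b ^ p / p := by
        have hpne : p ≠ 0 := by positivity
        calc c ^ p / p + c ^ (p - 1) * (b - c)
            = (c ^ p + p * (c ^ (p - 1) * (b - c))) / p := by field_simp
          _ ≤ b ^ p / p := by apply div_le_div_of_nonneg_right _ hp0.le; exact hbern
      nlinarith
    have geq := st10_gap_eq' hp hq hs (-η) (by linarith)
    have habsc : |s * (1 + -η)| ^ p = c ^ p := by
      rw [abs_of_nonneg (by nlinarith), hc]; ring_nf
    rw [habsc] at geq
    have hcs : s ^ (p - 1) * (s * (1 + -η)) = s ^ (p - 1) * c := by rw [hc]; ring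
    rw [hcs] at geq
    calc min (((1 + η) ^ p - 1 - p * η) / p) (((1 - η) ^ p - 1 + p * η) / p) * s ^ p
        ≤ (((1 - η) ^ p - 1 + p * η) / p) * s ^ p :=
          mul_le_mul_of_nonneg_right (min_le_right _ _) hsp
      _ = s ^ p / q - s ^ (p - 1) * c + c ^ p / p := by
          rw [geq]; ring_nf
      _ ≤ _ := step

lemma st10_gap_nonneg {p q : ℝ} (hp : 1 < p) (hq : q = p / (p - 1)) (s b : ℝ) (hs : 0 ≤ s) :
    0 ≤ s ^ p / q - s ^ (p - 1) * b + |b| ^ p / p := by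
  have hpq := st10_conj hp hq
  have h := Real.young_inequality (s ^ (p - 1)) b hpq.symm
  rw [abs_of_nonneg (Real.rpow_nonneg hs _), ← Real.rpow_mul hs, hpq.sub_one_mul_conj] at h
  linarith

lemma st10_master {p q : ℝ} (hp : 1 < p) (hq : q = p / (p - 1)) {η : ℝ} (hη0 : 0 < η)
    (hη1 : η ≤ 1/2) :
    ∃ C : ℝ, 0 ≤ C ∧ ∀ s b : ℝ, 0 ≤ s → η * s ≤ |b - s| →
      |b - s| ^ p ≤ C * (s ^ p / q - s ^ (p - 1) * b + |b| ^ p / p) := by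
  have hpq := st10_conj hp hq
  have hp0 : (0:ℝ) < p := by linarith
  have hp1 : (0:ℝ) < p - 1 := by linarith
  set K : ℝ := (2 * p) ^ (p - 1)⁻¹ with hK
  have hK1 : 1 ≤ K := Real.one_le_rpow (by linarith) (by positivity)
  have hKpos : 0 < K := by linarith
  set δ : ℝ := min (((1 + η) ^ p - 1 - p * η) / p) (((1 - η) ^ p - 1 + p * η) / p) with hδdef
  have hδ1 : 0 < ((1 + η) ^ p - 1 - p * η) / p := by
    have := one_add_mul_self_lt_rpow_one_add (by linarith : (-1:ℝ) ≤ η) (ne_of_gt hη0) hp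
    apply div_pos _ hp0; linarith
  have hδ2 : 0 < ((1 - η) ^ p - 1 + p * η) / p := by
    have h := one_add_mul_self_lt_rpow_one_add (by linarith : (-1:ℝ) ≤ -η) (by simp [ne_of_gt hη0]) hp
    have e : (1 + -η) = 1 - η := by ring
    rw [e] at h
    apply div_pos _ hp0; linarith
  have hδ : 0 < δ := lt_min hδ1 hδ2
  have hKp : (0:ℝ) ≤ K ^ p := Real.rpow_nonneg hKpos.le _
  refine ⟨max (max (2 * p) (2 ^ p * max p q)) (K ^ p / δ), ?_, ?_⟩
  · exact le_trans (by positivity : (0:ℝ) ≤ 2 * p)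
      (le_trans (le_max_left _ _) (le_max_left _ _))
  intro s b hs hcond
  have hgap := st10_gap_nonneg hp hq s b hs
  set C : ℝ := max (max (2 * p) (2 ^ p * max p q)) (K ^ p / δ) with hC
  set D : ℝ := s ^ p / q - s ^ (p - 1) * b + |b| ^ p / p with hD
  rcases le_or_gt b 0 with hb | hb
  · have h := st10_caseA hp hq hs hb
    calc |b - s| ^ p ≤ (2 ^ p * max p q) * D := h
      _ ≤ C * D := by
        apply mul_le_mul_of_nonneg_right _ hgap
        exact le_trans (le_max_right _ _) (le_max_left _ _)
  rcases le_or_gt (K * s) b with hKs | hKs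
  · have h := st10_caseB1 hp hq hs hb hKs
    calc |b - s| ^ p ≤ (2 * p) * D := h
      _ ≤ C * D := by
        apply mul_le_mul_of_nonneg_right _ hgap
        exact le_trans (le_max_left _ _) (le_max_left _ _)
  · have hspos : 0 < s := by
      by_contra hns
      push_neg at hns
      have : s = 0 := le_antisymm hns hs
      rw [this] at hKs; simp at hKs; linarith
    have h2 := st10_caseB2 hp hq hη0 hη1 hspos hb.le hcond
    -- |b - s| ≤ K * s
    have hbs : |b - s| ≤ K * s := by
      rcases le_or_gt s b with h' | h'
      · rw [abs_of_nonneg (by linarith)]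
        nlinarith
      · rw [abs_of_nonpos (by linarith)]
        nlinarith
    have h3 : |b - s| ^ p ≤ K ^ p * s ^ p := by
      calc |b - s| ^ p ≤ (K * s) ^ p := Real.rpow_le_rpow (abs_nonneg _) hbs hp0.le
        _ = K ^ p * s ^ p := Real.mul_rpow hKpos.le hs
    have h4 : K ^ p * s ^ p = (K ^ p / δ) * (δ * s ^ p) := by field_simp
    calc |b - s| ^ p ≤ K ^ p * s ^ p := h3
      _ = (K ^ p / δ) * (δ * s ^ p) := h4
      _ ≤ (K ^ p / δ) * D := mul_le_mul_of_nonneg_left h2 (by positivity)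
      _ ≤ C * D := by
        apply mul_le_mul_of_nonneg_right _ hgap
        exact le_max_right _ _

lemma st10_part3s {p q : ℝ} (hp : 1 < p) (hq : q = p / (p - 1)) {ε₁ : ℝ} (hε : 0 < ε₁) :
    ∃ ε₂ : ℝ, ∀ s b : ℝ, 0 ≤ s →
      |b - s| ^ p ≤ ε₁ * (s ^ p / q) + ε₂ * (s ^ p / q - s ^ (p - 1) * b + |b| ^ p / p) := by
  have hpq := st10_conj hp hq
  have hp0 : (0:ℝ) < p := by linarith
  have hq0 : (0:ℝ) < q := hpq.symm.pos
  set η : ℝ := min (1/2) ((ε₁ / q) ^ p⁻¹) with hηdef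
  have hη0 : 0 < η := lt_min (by norm_num) (Real.rpow_pos_of_pos (by positivity) _)
  have hη1 : η ≤ 1/2 := min_le_left _ _
  obtain ⟨C, hC0, hC⟩ := st10_master hp hq hη0 hη1
  refine ⟨C, fun s b hs => ?_⟩
  have hgap := st10_gap_nonneg hp hq s b hs
  rcases le_or_gt (η * s) |b - s| with h | h
  · have h1 := hC s b hs h
    have h2 : 0 ≤ ε₁ * (s ^ p / q) := by positivity
    linarith
  · have h1 : |b - s| ^ p ≤ η ^ p * s ^ p := by
      calc |b - s| ^ p ≤ (η * s) ^ p := Real.rpow_le_rpow (abs_nonneg _) h.le hp0.le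
        _ = η ^ p * s ^ p := Real.mul_rpow hη0.le hs
    have h2 : η ^ p ≤ ε₁ / q := by
      have hm : η ≤ (ε₁ / q) ^ p⁻¹ := min_le_right _ _
      calc η ^ p ≤ ((ε₁ / q) ^ p⁻¹) ^ p := Real.rpow_le_rpow hη0.le hm hp0.le
        _ = ε₁ / q := by
          rw [← Real.rpow_mul (by positivity), inv_mul_cancel₀ hp0.ne', Real.rpow_one]
    have h3 : η ^ p * s ^ p ≤ ε₁ / q * s ^ p :=
      mul_le_mul_of_nonneg_right h2 (Real.rpow_nonneg hs _)
    have h4 : 0 ≤ C * (s ^ p / q - s ^ (p - 1) * b + |b| ^ p / p) := mul_nonneg hC0 hgap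
    have e : ε₁ / q * s ^ p = ε₁ * (s ^ p / q) := by ring
    linarith

lemma st10_mid {p q : ℝ} (hp : 1 < p) (hq : q = p / (p - 1)) (hp2 : 2 ≤ p) {s b : ℝ}
    (hs : 0 ≤ s) (hcond : |b - s| ≤ 1 / p * s) :
    |b - s| ^ p ≤ 4 / p * (s ^ p / q - s ^ (p - 1) * b + |b| ^ p / p) := by
  have hp0 : (0:ℝ) < p := by linarith
  rcases eq_or_lt_of_le hs with hs0 | hspos
  · -- s = 0, so b = 0
    subst hs0
    have hb0 : b = 0 := by
      have h1 : |b - 0| ≤ 0 := by simpa using hcond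
      have h2 : |b - 0| = 0 := le_antisymm h1 (abs_nonneg _)
      simpa using h2
    subst hb0
    simp [Real.zero_rpow hp0.ne']
  · set u : ℝ := (b - s) / s with hu
    have hbu : b = s * (1 + u) := by
      rw [hu]
      field_simp
      ring
    have huabs : |u| ≤ 1 / p := by
      rw [hu, abs_div, abs_of_pos hspos, div_le_iff₀ hspos]
      calc |b - s| ≤ 1 / p * s := hcond
        _ = 1 / p * s := rfl
    have hup : |u| ≤ 1 / 2 := le_trans huabs (by
      rw [div_le_div_iff₀ hp0 (by norm_num)]; linarith)
    have hu1 : -1 ≤ u := by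
      have := abs_le.1 hup; linarith [this.1]
    have hg := st10_gap_eq' hp hq hspos u hu1
    rw [← hbu] at hg
    rw [hg]
    -- key: (1+u)^p - 1 - p*u ≥ p^2 * u^2 / 4
    have key : p ^ 2 * u ^ 2 / 4 ≤ (1 + u) ^ p - 1 - p * u := by
      have hb1 := one_add_mul_self_le_rpow_one_add hu1 (by linarith : 1 ≤ p / 2)
      -- 1 + (p/2)*u ≤ (1+u)^(p/2)
      have hlhs : (0:ℝ) ≤ 1 + p / 2 * u := by
        have h1 := abs_le.1 huabs
        have : -(1 / p) ≤ u := h1.1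
        have : p / 2 * u ≥ p / 2 * (-(1 / p)) :=
          mul_le_mul_of_nonneg_left this (by positivity)
        have e : p / 2 * (-(1 / p)) = -(1/2) := by field_simp
        rw [e] at this
        linarith
      have hsq : (1 + p / 2 * u) * (1 + p / 2 * u) ≤ (1 + u) ^ (p/2) * (1 + u) ^ (p/2) :=
        mul_le_mul hb1 hb1 hlhs (Real.rpow_nonneg (by linarith) _)
      have hmul : (1 + u) ^ (p/2) * (1 + u) ^ (p/2) = (1 + u) ^ p := by
        rw [← Real.rpow_add (by linarith [(abs_le.1 hup).1] : (0:ℝ) < 1 + u)]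
        ring_nf
      rw [hmul] at hsq
      nlinarith [hsq]
    have hsp : (0:ℝ) ≤ s ^ p := Real.rpow_nonneg hs _
    -- |b - s|^p ≤ u^2 * s^p
    have habs : |b - s| = |u| * s := by
      rw [hbu]
      have : s * (1 + u) - s = s * u := by ring
      rw [this, abs_mul, abs_of_pos hspos]; ring
    have h1 : |b - s| ^ p = |u| ^ p * s ^ p := by
      rw [habs, Real.mul_rpow (abs_nonneg _) hs]
    have h2 : |u| ^ p ≤ u ^ 2 := by
      rcases eq_or_lt_of_le (abs_nonneg u) with hu0 | hu0
      · rw [← hu0, Real.zero_rpow hp0.ne']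
        positivity
      · have : |u| ^ p ≤ |u| ^ (2:ℝ) :=
          Real.rpow_le_rpow_of_exponent_ge hu0 (by linarith) hp2
        calc |u| ^ p ≤ |u| ^ (2:ℝ) := this
          _ = u ^ 2 := by
            rw [show (2:ℝ) = ((2:ℕ):ℝ) by norm_num, Real.rpow_natCast, sq_abs]
    calc |b - s| ^ p = |u| ^ p * s ^ p := h1
      _ ≤ u ^ 2 * s ^ p := mul_le_mul_of_nonneg_right h2 hsp
      _ = 4 / p * (s ^ p * (p ^ 2 * u ^ 2 / 4 / p)) := by field_simp
      _ ≤ 4 / p * (s ^ p * (((1 + u) ^ p - 1 - p * u) / p)) := by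
          apply mul_le_mul_of_nonneg_left _ (by positivity : (0:ℝ) ≤ 4 / p)
          apply mul_le_mul_of_nonneg_left _ hsp
          apply div_le_div_of_nonneg_right key hp0.le

lemma st10_part4s {p q : ℝ} (hp : 1 < p) (hq : q = p / (p - 1)) (hp2 : 2 ≤ p) :
    ∃ ε₂ : ℝ, ∀ s b : ℝ, 0 ≤ s →
      |b - s| ^ p ≤ ε₂ * (s ^ p / q - s ^ (p - 1) * b + |b| ^ p / p) := by
  have hp0 : (0:ℝ) < p := by linarith
  have hη0 : (0:ℝ) < 1 / p := by positivity
  have hη1 : (1:ℝ) / p ≤ 1 / 2 := by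
    rw [div_le_div_iff₀ hp0 (by norm_num)]; linarith
  obtain ⟨C, hC0, hC⟩ := st10_master hp hq hη0 hη1
  refine ⟨max C (4 / p), fun s b hs => ?_⟩
  have hgap := st10_gap_nonneg hp hq s b hs
  rcases le_or_gt (1 / p * s) |b - s| with h | h
  · calc |b - s| ^ p ≤ C * (s ^ p / q - s ^ (p - 1) * b + |b| ^ p / p) := hC s b hs h
      _ ≤ max C (4 / p) * (s ^ p / q - s ^ (p - 1) * b + |b| ^ p / p) :=
        mul_le_mul_of_nonneg_right (le_max_left _ _) hgap
  · calc |b - s| ^ p ≤ 4 / p * (s ^ p / q - s ^ (p - 1) * b + |b| ^ p / p) :=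
        st10_mid hp hq hp2 hs h.le
      _ ≤ max C (4 / p) * (s ^ p / q - s ^ (p - 1) * b + |b| ^ p / p) :=
        mul_le_mul_of_nonneg_right (le_max_right _ _) hgap

lemma st10_transfer {p q : ℝ} (hp : 1 < p) (hq : q = p / (p - 1)) (a b : ℝ) :
    ∃ s c : ℝ, 0 ≤ s ∧ |b - Real.sign a * |a| ^ (q - 1)| = |c - s| ∧ |a| ^ q = s ^ p ∧
      a * b = s ^ (p - 1) * c ∧ |b| = |c| := by
  have hpq := st10_conj hp hq
  have hp0 : (0:ℝ) < p := by linarith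
  have hq1 : 1 < q := hpq.symm.lt
  have hqp : (q - 1) * p = q := Real.HolderConjugate.sub_one_mul_conj hpq.symm
  have hqp1 : (q - 1) * (p - 1) = 1 := by
    have h2 : (q - 1) * (p - 1) = (q - 1) * p - (q - 1) := by ring
    have h3 : q * (p - 1) = p := by
      have := Real.HolderConjugate.sub_one_mul_conj hpq.symm
      nlinarith [hpq.mul_eq_add]
    nlinarith [hpq.mul_eq_add]
  rcases eq_or_ne a 0 with ha | ha
  · refine ⟨0, b, le_refl 0, ?_, ?_, ?_, rfl⟩
    · rw [ha]; simp
    · rw [ha]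
      simp [Real.zero_rpow (by positivity : q ≠ 0), Real.zero_rpow hp0.ne']
    · simp [ha, Real.zero_rpow (by linarith : p - 1 ≠ 0)]
  · refine ⟨|a| ^ (q - 1), Real.sign a * b, Real.rpow_nonneg (abs_nonneg a) _, ?_, ?_, ?_, ?_⟩
    · have hsgn : Real.sign a * Real.sign a = 1 := by
        rcases lt_or_gt_of_ne ha with h | h
        · rw [Real.sign_of_neg h]; norm_num
        · rw [Real.sign_of_pos h]; norm_num
      have habs1 : |Real.sign a| = 1 := by
        rcases lt_or_gt_of_ne ha with h | h
        · rw [Real.sign_of_neg h]; norm_num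
        · rw [Real.sign_of_pos h]; norm_num
      calc |b - Real.sign a * |a| ^ (q - 1)|
          = |Real.sign a| * |b - Real.sign a * |a| ^ (q - 1)| := by rw [habs1, one_mul]
        _ = |Real.sign a * (b - Real.sign a * |a| ^ (q - 1))| := (abs_mul _ _).symm
        _ = |Real.sign a * b - |a| ^ (q - 1)| := by
            congr 1
            have : Real.sign a * (b - Real.sign a * |a| ^ (q - 1))
                = Real.sign a * b - (Real.sign a * Real.sign a) * |a| ^ (q - 1) := by ring
            rw [this, hsgn, one_mul]
    · rw [← Real.rpow_mul (abs_nonneg a), hqp]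
    · have he : (|a| ^ (q - 1)) ^ (p - 1) = |a| := by
        rw [← Real.rpow_mul (abs_nonneg a), hqp1, Real.rpow_one]
      rw [he]
      have : a = Real.sign a * |a| := by
        rcases lt_or_gt_of_ne ha with h | h
        · rw [Real.sign_of_neg h, abs_of_neg h]; ring
        · rw [Real.sign_of_pos h, abs_of_pos h]; ring
      calc a * b = (Real.sign a * |a|) * b := by rw [← this]
        _ = |a| * (Real.sign a * b) := by ring
    · have habs1 : |Real.sign a| = 1 := by
        rcases lt_or_gt_of_ne ha with h | h
        · rw [Real.sign_of_neg h]; norm_num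
        · rw [Real.sign_of_pos h]; norm_num
      rw [abs_mul, habs1, one_mul]

lemma st10_part2 {p q : ℝ} (hp : 1 < p) (hq : q = p / (p - 1)) (a : ℝ) :
    a * (Real.sign a * |a| ^ (q - 1)) - |Real.sign a * |a| ^ (q - 1)| ^ p / p
      = |a| ^ q / q := by
  have hpq := st10_conj hp hq
  have hp0 : (0:ℝ) < p := by linarith
  have hq1 : 1 < q := hpq.symm.lt
  have hqp : (q - 1) * p = q := Real.HolderConjugate.sub_one_mul_conj hpq.symm
  rcases eq_or_ne a 0 with ha | ha
  · rw [ha]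
    simp [Real.zero_rpow (by linarith : q - 1 ≠ 0), Real.zero_rpow hp0.ne',
      Real.zero_rpow (by positivity : q ≠ 0)]
  · have hapos : 0 < |a| := abs_pos.2 ha
    have habs1 : |Real.sign a| = 1 := by
      rcases lt_or_gt_of_ne ha with h | h
      · rw [Real.sign_of_neg h]; norm_num
      · rw [Real.sign_of_pos h]; norm_num
    have hsgn : a * Real.sign a = |a| := by
      rcases lt_or_gt_of_ne ha with h | h
      · rw [Real.sign_of_neg h, abs_of_neg h]; ring
      · rw [Real.sign_of_pos h, abs_of_pos h]; ring
    have h1 : a * (Real.sign a * |a| ^ (q - 1)) = |a| ^ q := by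
      calc a * (Real.sign a * |a| ^ (q - 1)) = (a * Real.sign a) * |a| ^ (q - 1) := by ring
        _ = |a| ^ (1:ℝ) * |a| ^ (q - 1) := by rw [hsgn, Real.rpow_one]
        _ = |a| ^ q := by rw [← Real.rpow_add hapos]; ring_nf
    have h2 : |Real.sign a * |a| ^ (q - 1)| ^ p = |a| ^ q := by
      rw [abs_mul, habs1, one_mul, abs_of_nonneg (Real.rpow_nonneg (abs_nonneg a) _),
        ← Real.rpow_mul (abs_nonneg a), hqp]
    rw [h1, h2]
    have e : 1 - p⁻¹ = q⁻¹ := hpq.one_sub_inv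
    have hq0 : q ≠ 0 := hpq.symm.ne_zero
    field_simp
    linear_combination hpq.mul_eq_add

lemma st10_part1 {p q : ℝ} (hp : 1 < p) (hq : q = p / (p - 1)) (a b : ℝ) :
    a * b - |b| ^ p / p ≤
      a * (Real.sign a * |a| ^ (q - 1)) - |Real.sign a * |a| ^ (q - 1)| ^ p / p := by
  have hpq := st10_conj hp hq
  rw [st10_part2 hp hq a]
  have h := Real.young_inequality a b hpq.symm
  linarith

theorem stmt10 (p q : ℝ) (hp : 1 < p) (hq : q = p / (p - 1)) :
    (∀ a b : ℝ, a * b - |b| ^ p / p ≤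
        a * (Real.sign a * |a| ^ (q - 1)) - |Real.sign a * |a| ^ (q - 1)| ^ p / p) ∧
    (∀ a : ℝ, a * (Real.sign a * |a| ^ (q - 1)) - |Real.sign a * |a| ^ (q - 1)| ^ p / p
        = |a| ^ q / q) ∧
    (∀ ε₁ : ℝ, 0 < ε₁ → ∃ ε₂ : ℝ, ∀ a b : ℝ,
        |b - Real.sign a * |a| ^ (q - 1)| ^ p ≤
          ε₁ * (|a| ^ q / q) + ε₂ * (|a| ^ q / q - a * b + |b| ^ p / p)) ∧
    (2 ≤ p → ∃ ε₂ : ℝ, ∀ a b : ℝ,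
        |b - Real.sign a * |a| ^ (q - 1)| ^ p ≤
          ε₂ * (|a| ^ q / q - a * b + |b| ^ p / p)) := by
  refine ⟨st10_part1 hp hq, st10_part2 hp hq, ?_, ?_⟩
  · intro ε₁ hε
    obtain ⟨ε₂, h⟩ := st10_part3s hp hq hε
    refine ⟨ε₂, fun a b => ?_⟩
    obtain ⟨s, c, hs, he1, he2, he3, he4⟩ := st10_transfer hp hq a b
    rw [he1, he2, he3, he4]
    exact h s c hs
  · intro hp2
    obtain ⟨ε₂, h⟩ := st10_part4s hp hq hp2
    refine ⟨ε₂, fun a b => ?_⟩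
    obtain ⟨s, c, hs, he1, he2, he3, he4⟩ := st10_transfer hp hq a b
    rw [he1, he2, he3, he4]
    exact h s c hs
end

section
/- For p ≥ 2, q = p/(p-1), there exists a finite constant ε₂ = ε₂(p) such that for all a, b ∈ ℝ: |b - sgn(a)|a|^{q-1}|^p ≤ ε₂ (|a|^q/q - a·b + |b|^p/p). -/
open Real

lemma aux_superadd {X Y r : ℝ} (hX : 0 ≤ X) (hY : 0 ≤ Y) (hr : 1 ≤ r) :
    X ^ r + Y ^ r ≤ (X + Y) ^ r := by
  lift X to NNReal using hX
  lift Y to NNReal using hY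
  exact_mod_cast NNReal.add_rpow_le_rpow_add X Y hr

lemma aux_abs_rpow {p : ℝ} (s : ℝ) : |s| ^ p = (s ^ 2) ^ (p / 2) := by
  have h2 : |s| ^ (2:ℝ) = s ^ 2 := by
    rw [show (2:ℝ) = ((2:ℕ):ℝ) by norm_num, Real.rpow_natCast]; exact sq_abs s
  rw [← h2, ← Real.rpow_mul (abs_nonneg s), show (2:ℝ) * (p/2) = p by ring]

lemma aux_clarkson {p : ℝ} (hp : 2 ≤ p) (u v : ℝ) :
    2 * (|u| ^ p + |v| ^ p) ≤ |u + v| ^ p + |u - v| ^ p := by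
  have hp2 : (1:ℝ) ≤ p / 2 := by linarith
  have hcvx := (convexOn_rpow hp2).2 (x := (u+v)^2) (y := (u-v)^2)
    (Set.mem_Ici.mpr (sq_nonneg _)) (Set.mem_Ici.mpr (sq_nonneg _))
    (by norm_num : (0:ℝ) ≤ 1/2) (by norm_num : (0:ℝ) ≤ 1/2) (by norm_num)
  simp only [smul_eq_mul] at hcvx
  have hmid : (1/2) * (u+v)^2 + (1/2) * (u-v)^2 = u^2 + v^2 := by ring
  rw [hmid] at hcvx
  have hsup : (u^2) ^ (p/2) + (v^2) ^ (p/2) ≤ (u^2 + v^2) ^ (p/2) :=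
    aux_superadd (sq_nonneg u) (sq_nonneg v) hp2
  rw [aux_abs_rpow u, aux_abs_rpow v, aux_abs_rpow (u+v), aux_abs_rpow (u-v)]
  nlinarith [hcvx, hsup]

theorem stmt11 (p q : ℝ) (hp : 2 ≤ p) (hq : q = p / (p - 1)) :
    ∃ ε₂ : ℝ, ∀ a b : ℝ,
      |b - Real.sign a * |a| ^ (q - 1)| ^ p ≤
        ε₂ * (|a| ^ q / q - a * b + |b| ^ p / p) := by
  have hp1 : (1:ℝ) < p := by linarith
  have hp0 : (0:ℝ) < p := by linarith
  have hp1' : p - 1 ≠ 0 := by intro h; linarith [sub_eq_zero.mp h]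
  have hpne : p ≠ 0 := ne_of_gt hp0
  have hq0 : 0 < q := by rw [hq]; exact div_pos hp0 (by linarith)
  have hpq : p.HolderConjugate q := (Real.holderConjugate_iff_eq_conjExponent hp1).mpr hq
  have hq1p : (q - 1) * p = q := by rw [hq]; field_simp; ring
  refine ⟨p * 2 ^ (p - 1), fun a b => ?_⟩
  set x := Real.sign a * |a| ^ (q - 1) with hxdef
  -- facts about x
  have hmul : ∀ c : ℝ, 0 < c → c * c ^ (q - 1) = c ^ q := by
    intro c hc
    nth_rewrite 1 [← Real.rpow_one c]
    rw [← Real.rpow_add hc]; ring_nf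
  have hax : a * x = |a| ^ q := by
    rcases lt_trichotomy a 0 with h | h | h
    · rw [hxdef, Real.sign_of_neg h]
      have ha : |a| = -a := abs_of_neg h
      have hthis := hmul |a| (abs_pos.mpr (ne_of_lt h))
      rw [ha] at hthis ⊢
      linear_combination hthis
    · subst h
      simp [Real.sign_zero, Real.zero_rpow (ne_of_gt hq0)]
    · rw [hxdef, Real.sign_of_pos h]
      have ha : |a| = a := abs_of_pos h
      have hthis := hmul |a| (abs_pos.mpr (ne_of_gt h))
      rw [ha] at hthis ⊢
      linear_combination hthis
  have hxp : |x| ^ p = |a| ^ q := by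
    rcases eq_or_ne a 0 with h | h
    · subst h
      simp [hxdef, Real.sign_zero, Real.zero_rpow (ne_of_gt hq0),
        Real.zero_rpow hpne]
    · have hsign : |Real.sign a| = 1 := by
        rcases lt_or_gt_of_ne h with h' | h'
        · rw [Real.sign_of_neg h']; norm_num
        · rw [Real.sign_of_pos h']; norm_num
      have habsx : |x| = |a| ^ (q - 1) := by
        rw [hxdef, abs_mul, hsign, one_mul,
          abs_of_nonneg (Real.rpow_nonneg (abs_nonneg a) _)]
      rw [habsx, ← Real.rpow_mul (abs_nonneg a), hq1p]
  -- the midpoint and half-difference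
  set u := (b + x) / 2 with hudef
  set v := (b - x) / 2 with hvdef
  have hcl := aux_clarkson hp u v
  have huv1 : u + v = b := by rw [hudef, hvdef]; ring
  have huv2 : u - v = x := by rw [hudef, hvdef]; ring
  rw [huv1, huv2, hxp] at hcl
  -- Young's inequality at u
  have hy := Real.young_inequality u a hpq
  have huab : u * a = (a * b + |a| ^ q) / 2 := by
    rw [hudef]; nlinarith [hax]
  rw [huab] at hy
  -- rewrite |a|^q/q
  have hAq : |a| ^ q / q = |a| ^ q * (p - 1) / p := by
    rw [hq]; field_simp
  rw [hAq] at hy ⊢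
  -- key scalar bound : 2 |v|^p ≤ p * R
  have hkey : 2 * |v| ^ p ≤
      p * (|a| ^ q * (p - 1) / p - a * b + |b| ^ p / p) := by
    have hy2 : p * ((a * b + |a| ^ q) / 2) ≤ |u| ^ p + |a| ^ q * (p - 1) := by
      have := mul_le_mul_of_nonneg_left hy hp0.le
      calc p * ((a * b + |a| ^ q) / 2)
          ≤ p * (|u| ^ p / p + |a| ^ q * (p - 1) / p) := this
        _ = |u| ^ p + |a| ^ q * (p - 1) := by field_simp
    have hgoal : p * (|a| ^ q * (p - 1) / p - a * b + |b| ^ p / p)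
        = |a| ^ q * (p - 1) - p * (a * b) + |b| ^ p := by field_simp
    rw [hgoal]
    nlinarith [hcl, hy2]
  -- conclude
  have hbx : b - x = 2 * v := by rw [hvdef]; ring
  have h2vp : |b - x| ^ p = 2 ^ p * |v| ^ p := by
    rw [hbx, abs_mul, abs_two,
      Real.mul_rpow (by norm_num : (0:ℝ) ≤ 2) (abs_nonneg v)]
  have h2p : (2:ℝ) ^ p = 2 * 2 ^ (p - 1) := by
    have h := Real.rpow_add two_pos 1 (p - 1)
    rw [Real.rpow_one] at h
    rw [show (1:ℝ) + (p - 1) = p by ring] at h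
    exact h
  have hC : (0:ℝ) < 2 ^ (p - 1) := Real.rpow_pos_of_pos two_pos _
  rw [h2vp]
  calc (2:ℝ) ^ p * |v| ^ p = 2 ^ (p - 1) * (2 * |v| ^ p) := by rw [h2p]; ring
    _ ≤ 2 ^ (p - 1) * (p * (|a| ^ q * (p - 1) / p - a * b + |b| ^ p / p)) :=
        mul_le_mul_of_nonneg_left hkey hC.le
    _ = p * 2 ^ (p - 1) * (|a| ^ q * (p - 1) / p - a * b + |b| ^ p / p) := by ring
end

section
/- Let π₀ = N(-m,1), π₁ = N(m,1), m > 0, q ≥ 1. Then ∫_{x ≥ 0} π₀(x)^q / π₁(x)^{q-1} dx ≤ (1/(qm)) · (2π)^{-1/2} · exp(-m²/2). -/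
open Real MeasureTheory Set

/-- Gaussian density with mean `a` and unit variance. -/
noncomputable def gaussDensity (a x : ℝ) : ℝ :=
  (Real.sqrt (2 * Real.pi))⁻¹ * Real.exp (-(x - a) ^ 2 / 2)

theorem stmt14 (m q : ℝ) (hm : 0 < m) (hq : 1 ≤ q) :
    ∫ x in Ici (0 : ℝ), gaussDensity (-m) x ^ q / gaussDensity m x ^ (q - 1) ≤
      (1 / (q * m)) * (Real.sqrt (2 * Real.pi))⁻¹ * Real.exp (-m ^ 2 / 2) := by
  set c : ℝ := (Real.sqrt (2 * Real.pi))⁻¹ with hc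
  have hcpos : 0 < c := by
    have : 0 < Real.sqrt (2 * Real.pi) := Real.sqrt_pos.2 (by positivity)
    positivity
  set t : ℝ := (2 * q - 1) * m with ht
  have htpos : 0 < t := by nlinarith
  set C : ℝ := c * Real.exp (2 * q * (q - 1) * m ^ 2) with hC
  set D : ℝ := c * Real.exp (-m ^ 2 / 2) with hD
  -- pointwise identity
  have hfe : ∀ x : ℝ, gaussDensity (-m) x ^ q / gaussDensity m x ^ (q - 1)
      = C * Real.exp (-(x + t) ^ 2 / 2) := by
    intro x
    unfold gaussDensity
    have hcq : c ^ q = c * c ^ (q - 1) := by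
      rw [show q = 1 + (q - 1) by ring] at *
      rw [Real.rpow_add hcpos, Real.rpow_one]
      ring_nf
    rw [Real.mul_rpow hcpos.le (Real.exp_pos _).le,
        Real.mul_rpow hcpos.le (Real.exp_pos _).le,
        ← Real.exp_mul, ← Real.exp_mul,
        div_eq_iff (by positivity), hC, hcq, ht]
    rw [show -(x - -m) ^ 2 / 2 * q = 2 * q * (q - 1) * m ^ 2 +
        (-(x + (2 * q - 1) * m) ^ 2 / 2) + (-(x - m) ^ 2 / 2 * (q - 1)) by ring]
    rw [Real.exp_add, Real.exp_add]
    ring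
  -- pointwise bound
  have hbound : ∀ x : ℝ, x ∈ Ici (0 : ℝ) →
      gaussDensity (-m) x ^ q / gaussDensity m x ^ (q - 1) ≤ D * Real.exp (-(t * x)) := by
    intro x _
    rw [hfe x, hC, hD]
    rw [show c * Real.exp (2 * q * (q - 1) * m ^ 2) * Real.exp (-(x + t) ^ 2 / 2)
        = c * Real.exp (2 * q * (q - 1) * m ^ 2 + -(x + t) ^ 2 / 2) by
      rw [Real.exp_add]; ring]
    rw [show c * Real.exp (-m ^ 2 / 2) * Real.exp (-(t * x))
        = c * Real.exp (-m ^ 2 / 2 + -(t * x)) by rw [Real.exp_add]; ring]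
    refine mul_le_mul_of_nonneg_left (Real.exp_le_exp.2 ?_) hcpos.le
    have h1 : t ^ 2 = 4 * q ^ 2 * m ^ 2 - 4 * q * m ^ 2 + m ^ 2 := by rw [ht]; ring
    nlinarith [sq_nonneg x, h1]
  -- integrability of LHS
  have hint1 : IntegrableOn (fun x => gaussDensity (-m) x ^ q / gaussDensity m x ^ (q - 1))
      (Ici (0 : ℝ)) := by
    have hg : Integrable (fun x : ℝ => Real.exp (-(x + t) ^ 2 / 2)) := by
      have := (integrable_exp_neg_mul_sq (by norm_num : (0:ℝ) < 1/2)).comp_add_right t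
      refine this.congr (Filter.Eventually.of_forall fun x => ?_)
      ring_nf
    refine ((hg.const_mul C).congr (Filter.Eventually.of_forall fun x => ?_)).integrableOn
    exact (hfe x).symm
  -- integrability of RHS
  have hint2 : IntegrableOn (fun x => D * Real.exp (-(t * x))) (Ici (0 : ℝ)) := by
    rw [integrableOn_Ici_iff_integrableOn_Ioi]
    simpa [neg_mul, IntegrableOn] using (exp_neg_integrableOn_Ioi 0 htpos).const_mul D
  have step1 := setIntegral_mono_on hint1 hint2 measurableSet_Ici hbound
  refine step1.trans ?_
  -- compute RHS integral
  have hval : ∫ x in Ici (0 : ℝ), D * Real.exp (-(t * x)) = D * t⁻¹ := by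
    rw [integral_Ici_eq_integral_Ioi, integral_const_mul]
    congr 1
    have := integral_comp_mul_left_Ioi (fun x : ℝ => Real.exp (-x)) 0 htpos
    simpa [mul_zero, integral_exp_neg_Ioi_zero, integral_exp_Iic_zero, smul_eq_mul] using this
  rw [hval, hD]
  have h1 : t⁻¹ ≤ (q * m)⁻¹ := by
    apply inv_anti₀ (by positivity)
    rw [ht]; nlinarith
  have hD0 : 0 < c * Real.exp (-m ^ 2 / 2) := by positivity
  calc c * Real.exp (-m ^ 2 / 2) * t⁻¹ ≤ c * Real.exp (-m ^ 2 / 2) * (q * m)⁻¹ :=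
        mul_le_mul_of_nonneg_left h1 hD0.le
    _ = 1 / (q * m) * c * Real.exp (-m ^ 2 / 2) := by ring
end

section
/- Let π = (1/2)N(-m,1) + (1/2)N(m,1) and μ = (3/4)N(-m,1) + (1/4)N(m,1) on ℝ. Then for every m ≥ 1/80 and q ≥ 1: E_μ[|(log(π/μ))'|^q] ≤ (0.2/(qm)) (4m)^q exp(-m²/2). -/
open Real MeasureTheory Set

lemma gauss_pos (a x : ℝ) : 0 < gaussDensity a x := by
  unfold gaussDensity; positivity

lemma gauss_flip (m x : ℝ) : gaussDensity m x = Real.exp (2*m*x) * gaussDensity (-m) x := by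
  unfold gaussDensity
  rw [mul_left_comm, ← Real.exp_add]
  congr 1
  ring

lemma tail_exact (c : ℝ) : ∫ x in Ioi (0:ℝ), (x + c) * Real.exp (-(x+c)^2/2) = Real.exp (-c^2/2) := by
  have h : ∀ x ∈ Ioi (0:ℝ), HasDerivAt (fun y => -Real.exp (-(y+c)^2/2)) ((x + c) * Real.exp (-(x+c)^2/2)) x := by
    intro x _
    have h1 : HasDerivAt (fun y : ℝ => -(y+c)^2/2) (-(x+c)) x := by
      have : HasDerivAt (fun y : ℝ => -(y+c)^2/2) _ x := (((hasDerivAt_id x).add_const c).pow 2).neg.div_const 2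
      convert this using 1
      simp only [id_eq]
      push_cast
      ring
    have : HasDerivAt (fun y => -Real.exp (-(y+c)^2/2)) _ x := (h1.exp).neg
    convert this using 1
    ring
  have hint : IntegrableOn (fun x => (x + c) * Real.exp (-(x+c)^2/2)) (Ioi (0:ℝ)) := by
    have : Integrable (fun x : ℝ => x * Real.exp (-(2⁻¹:ℝ) * x^2)) := integrable_mul_exp_neg_mul_sq (by norm_num)
    have h2 := this.comp_sub_right (-c)
    apply Integrable.integrableOn
    convert h2 using 2 with x
    ring_nf
  have hcont : ContinuousWithinAt (fun y : ℝ => -Real.exp (-(y+c)^2/2)) (Ici 0) 0 :=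
    (by fun_prop : Continuous fun y : ℝ => -Real.exp (-(y+c)^2/2)).continuousWithinAt
  have htend : Filter.Tendsto (fun y : ℝ => -Real.exp (-(y+c)^2/2)) Filter.atTop (nhds 0) := by
    rw [show (0:ℝ) = -0 by norm_num]
    apply Filter.Tendsto.neg
    rw [Real.tendsto_exp_comp_nhds_zero]
    have h3 : Filter.Tendsto (fun y : ℝ => (y+c)^2/2) Filter.atTop Filter.atTop := by
      apply Filter.Tendsto.atTop_div_const (by norm_num)
      exact (Filter.tendsto_pow_atTop (by norm_num)).comp (Filter.tendsto_atTop_add_const_right _ c Filter.tendsto_id)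
    have := Filter.tendsto_neg_atTop_atBot.comp h3
    apply this.congr
    intro y
    simp
    ring
  have := integral_Ioi_of_hasDerivAt_of_tendsto hcont h hint htend
  rw [this]
  norm_num

lemma tail_int (c : ℝ) : IntegrableOn (fun x => (x + c) * Real.exp (-(x+c)^2/2)) (Ioi (0:ℝ)) := by
  have : Integrable (fun x : ℝ => x * Real.exp (-(2⁻¹:ℝ) * x^2)) := integrable_mul_exp_neg_mul_sq (by norm_num)
  have h2 := this.comp_sub_right (-c)
  apply Integrable.integrableOn
  convert h2 using 2 with x
  ring_nf

lemma exp_sq_int (c : ℝ) : Integrable (fun x : ℝ => Real.exp (-(x+c)^2/2)) := by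
  have : Integrable (fun x : ℝ => Real.exp (-(2⁻¹:ℝ) * x^2)) := integrable_exp_neg_mul_sq (by norm_num)
  have h2 := this.comp_sub_right (-c)
  convert h2 using 2 with x
  ring_nf

lemma tail_le (c : ℝ) (hc : 0 < c) :
    ∫ x in Ioi (0:ℝ), Real.exp (-(x+c)^2/2) ≤ Real.exp (-c^2/2)/c := by
  have step : ∫ x in Ioi (0:ℝ), Real.exp (-(x+c)^2/2)
      ≤ ∫ x in Ioi (0:ℝ), ((x+c)/c) * Real.exp (-(x+c)^2/2) := by
    apply setIntegral_mono_on (exp_sq_int c).integrableOn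
    · apply ((tail_int c).const_mul (1/c)).congr
      filter_upwards with x
      ring
    · exact measurableSet_Ioi
    · intro x hx
      simp only [mem_Ioi] at hx
      have h1 : 1 ≤ (x+c)/c := by rw [le_div_iff₀ hc]; linarith
      nth_rewrite 1 [show Real.exp (-(x+c)^2/2) = 1 * Real.exp (-(x+c)^2/2) by ring]
      exact mul_le_mul_of_nonneg_right h1 (Real.exp_nonneg _)
  refine step.trans ?_
  have : ∀ x : ℝ, ((x+c)/c) * Real.exp (-(x+c)^2/2) = (1/c) * ((x+c) * Real.exp (-(x+c)^2/2)) :=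
    fun x => by ring
  simp_rw [this, MeasureTheory.integral_const_mul, tail_exact c]
  apply le_of_eq
  field_simp

lemma tail_le_Iic (c : ℝ) (hc : 0 < c) :
    ∫ x in Iic (0:ℝ), Real.exp (-(x-c)^2/2) ≤ Real.exp (-c^2/2)/c := by
  have h := integral_comp_neg_Iic (0:ℝ) (fun u => Real.exp (-(u+c)^2/2))
  simp only [neg_zero] at h
  have h2 : ∀ x : ℝ, Real.exp (-(-x+c)^2/2) = Real.exp (-(x-c)^2/2) := by
    intro x; congr 1; ring
  simp_rw [h2] at h
  rw [h]
  exact tail_le c hc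

lemma gauss_shift (m q x : ℝ) :
    Real.exp (2*m*q*x) * gaussDensity (-m) x
      = ((Real.sqrt (2*Real.pi))⁻¹ * Real.exp ((((2*q-1)*m)^2-m^2)/2)) * Real.exp (-(x-(2*q-1)*m)^2/2) := by
  unfold gaussDensity
  calc Real.exp (2*m*q*x) * ((Real.sqrt (2*Real.pi))⁻¹ * Real.exp (-(x - -m)^2/2))
      = (Real.sqrt (2*Real.pi))⁻¹ * Real.exp (2*m*q*x + -(x - -m)^2/2) := by
        rw [Real.exp_add]; ring
    _ = (Real.sqrt (2*Real.pi))⁻¹ * Real.exp ((((2*q-1)*m)^2-m^2)/2 + -(x-(2*q-1)*m)^2/2) := by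
        congr 2; ring
    _ = ((Real.sqrt (2*Real.pi))⁻¹ * Real.exp ((((2*q-1)*m)^2-m^2)/2)) * Real.exp (-(x-(2*q-1)*m)^2/2) := by
        rw [Real.exp_add]; ring

lemma gauss_integrable (a : ℝ) : Integrable (fun x : ℝ => gaussDensity a x) := by
  have h := (exp_sq_int (-a)).const_mul ((Real.sqrt (2*Real.pi))⁻¹)
  refine h.congr (Filter.Eventually.of_forall fun x => ?_)
  simp only [gaussDensity, ← sub_eq_add_neg]

lemma f1_integrable (m q : ℝ) : Integrable (fun x : ℝ => Real.exp (2*m*q*x) * gaussDensity (-m) x) := by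
  have h := (exp_sq_int (-((2*q-1)*m))).const_mul
    ((Real.sqrt (2*Real.pi))⁻¹ * Real.exp ((((2*q-1)*m)^2-m^2)/2))
  refine h.congr (Filter.Eventually.of_forall fun x => ?_)
  simp only [← sub_eq_add_neg]
  rw [gauss_shift m q x]

lemma deriv_logratio (m x : ℝ) :
    deriv (fun y : ℝ => Real.log (2*(1+Real.exp (2*m*y))/(3+Real.exp (2*m*y)))) x
      = 4*m*Real.exp (2*m*x)/((1+Real.exp (2*m*x))*(3+Real.exp (2*m*x))) := by
  have hEpos : 0 < Real.exp (2*m*x) := Real.exp_pos _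
  set E := Real.exp (2*m*x) with hE
  have hd : HasDerivAt (fun y : ℝ => Real.exp (2*m*y)) (E*(2*m)) x := by
    have h0 : HasDerivAt (fun y : ℝ => 2*m*y) (2*m) x := by
      simpa using (hasDerivAt_id x).const_mul (2*m)
    exact h0.exp
  have hu : HasDerivAt (fun y : ℝ => 2*(1+Real.exp (2*m*y))) (2*(E*(2*m))) x :=
    (hd.const_add 1).const_mul 2
  have hv : HasDerivAt (fun y : ℝ => 3+Real.exp (2*m*y)) (E*(2*m)) x := hd.const_add 3
  have hvne : (3:ℝ)+E ≠ 0 := by positivity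
  have hq : HasDerivAt (fun y : ℝ => 2*(1+Real.exp (2*m*y))/(3+Real.exp (2*m*y))) _ x := hu.div hv hvne
  have hne : 2*(1+E)/(3+E) ≠ 0 := by positivity
  rw [(hq.log hne).deriv]
  field_simp
  ring

lemma pointwise_bound (m q x : ℝ) (hm : 0 < m) (hq : 1 ≤ q) :
    (4*m*Real.exp (2*m*x)/((1+Real.exp (2*m*x))*(3+Real.exp (2*m*x))))^q
      * ((3/4) * gaussDensity (-m) x + (1/4) * gaussDensity m x)
    ≤ if x ≤ 0 then (3/4)*(4*m/3)^q * (Real.exp (2*m*q*x) * gaussDensity (-m) x)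
      else m^q * gaussDensity (-m) x := by
  have hEpos : 0 < Real.exp (2*m*x) := Real.exp_pos _
  set E := Real.exp (2*m*x) with hE
  set g := gaussDensity (-m) x with hgdef
  have hg : 0 < g := gauss_pos _ _
  have hq0 : 0 ≤ q := by linarith
  have hμx : (3/4)*g + (1/4)*gaussDensity m x = g * ((3+E)/4) := by
    rw [gauss_flip]; ring
  rw [hμx]
  have hexpq : Real.exp (2*m*q*x) = E^q := by
    rw [hE, ← Real.exp_mul]; ring_nf
  by_cases hx : x ≤ 0
  · simp only [hx, if_true]
    have hE1 : E ≤ 1 := Real.exp_le_one_iff.mpr (by nlinarith)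
    have step1 : 4*m*E/((1+E)*(3+E)) ≤ 4*m*E/(3+E) := by
      apply div_le_div_of_nonneg_left (by positivity) (by positivity)
      nlinarith
    have step2 : (4*m*E/((1+E)*(3+E)))^q ≤ (4*m*E/(3+E))^q :=
      Real.rpow_le_rpow (by positivity) step1 hq0
    calc (4*m*E/((1+E)*(3+E)))^q * (g * ((3+E)/4))
        ≤ (4*m*E/(3+E))^q * (g * ((3+E)/4)) := by
          apply mul_le_mul_of_nonneg_right step2 (by positivity)
      _ = (3+E)^(1-q) * ((4*m)^q * E^q * g / 4) := by
          rw [Real.div_rpow (by positivity) (by positivity),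
            Real.mul_rpow (by positivity) (by positivity),
            Real.rpow_sub (by positivity), Real.rpow_one]
          ring
      _ ≤ (3:ℝ)^(1-q) * ((4*m)^q * E^q * g / 4) := by
          apply mul_le_mul_of_nonneg_right _ (by positivity)
          exact Real.rpow_le_rpow_of_nonpos (by norm_num) (by linarith) (by linarith)
      _ = (3/4)*(4*m/3)^q * (Real.exp (2*m*q*x) * g) := by
          rw [hexpq, Real.div_rpow (by positivity) (by norm_num),
            Real.rpow_sub (by norm_num), Real.rpow_one]
          ring
  · simp only [hx, if_false]
    push_neg at hx
    have hE1 : 1 ≤ E := Real.one_le_exp_iff.mpr (by nlinarith)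
    have step1 : 4*m*E/((1+E)*(3+E)) ≤ 4*m/(3+E) := by
      rw [show 4*m*E/((1+E)*(3+E)) = (4*m/(3+E))*(E/(1+E)) by field_simp]
      nth_rewrite 2 [show 4*m/(3+E) = (4*m/(3+E))*1 by ring]
      apply mul_le_mul_of_nonneg_left _ (by positivity)
      rw [div_le_one (by positivity)]
      linarith
    have step2 : (4*m*E/((1+E)*(3+E)))^q ≤ (4*m/(3+E))^q :=
      Real.rpow_le_rpow (by positivity) step1 hq0
    calc (4*m*E/((1+E)*(3+E)))^q * (g * ((3+E)/4))
        ≤ (4*m/(3+E))^q * (g * ((3+E)/4)) := by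
          apply mul_le_mul_of_nonneg_right step2 (by positivity)
      _ = (3+E)^(1-q) * ((4*m)^q * g / 4) := by
          rw [Real.div_rpow (by positivity) (by positivity),
            Real.rpow_sub (by positivity), Real.rpow_one]
          ring
      _ ≤ (4:ℝ)^(1-q) * ((4*m)^q * g / 4) := by
          apply mul_le_mul_of_nonneg_right _ (by positivity)
          exact Real.rpow_le_rpow_of_nonpos (by norm_num) (by linarith) (by linarith)
      _ = m^q * g := by
          rw [Real.mul_rpow (by norm_num) hm.le,
            Real.rpow_sub (by norm_num), Real.rpow_one]
          have h4 : (4:ℝ)^q ≠ 0 := by positivity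
          field_simp

lemma numeric_bound (q : ℝ) (hq : 1 ≤ q) :
    (3/4)*q/(3^q*(2*q-1)) + q/(4:ℝ)^q ≤ 1/2 := by
  have h2q : (0:ℝ) < 2*q-1 := by linarith
  have hA : (0:ℝ) < 3^q := by positivity
  have hB : (0:ℝ) < 4^q := by positivity
  have hlog : (1:ℝ) ≤ Real.log 4 := by
    rw [Real.le_log_iff_exp_le (by norm_num)]
    exact le_trans Real.exp_one_lt_d9.le (by norm_num)
  have h4q1 : q ≤ (4:ℝ)^(q-1) := by
    have he := Real.add_one_le_exp ((q-1)*Real.log 4)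
    have h40 : (4:ℝ)^(q-1) = Real.exp ((q-1)*Real.log 4) := by
      rw [Real.rpow_def_of_pos (by norm_num)]
      ring_nf
    rw [h40]
    nlinarith [he, hlog, hq]
  have hsplit : (4:ℝ)^q = 4^(q-1) * 4 := by
    rw [← Real.rpow_add_one (by norm_num : (4:ℝ) ≠ 0) (q-1)]
    norm_num
  have hterm2 : q/(4:ℝ)^q ≤ 1/4 := by
    rw [div_le_iff₀ hB, hsplit]
    nlinarith [h4q1]
  have h3q : (3:ℝ) ≤ 3^q := by
    calc (3:ℝ) = 3^(1:ℝ) := (Real.rpow_one 3).symm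
      _ ≤ 3^q := Real.rpow_le_rpow_of_exponent_le (by norm_num) hq
  have hterm1 : (3/4)*q/(3^q*(2*q-1)) ≤ 1/4 := by
    rw [div_le_iff₀ (by positivity)]
    nlinarith [mul_le_mul_of_nonneg_right h3q h2q.le]
  linarith

lemma sqrt_two_pi_ge : (2.5:ℝ) ≤ Real.sqrt (2*Real.pi) := by
  have h : (6.25:ℝ) ≤ 2*Real.pi := by nlinarith [Real.pi_gt_d6]
  calc (2.5:ℝ) = Real.sqrt (6.25) := by
        rw [show (6.25:ℝ) = 2.5^2 by norm_num, Real.sqrt_sq (by norm_num)]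
    _ ≤ Real.sqrt (2*Real.pi) := Real.sqrt_le_sqrt h

lemma final_num (q m e s A B X : ℝ) (hq : 1 ≤ q) (hm : 0 < m) (he : 0 < e) (hs : 2.5 ≤ s)
    (hA : 0 < A) (hB : 0 < B) (hX : 0 < X)
    (hN : (3/4)*q/(A*(2*q-1)) + q/B ≤ 1/2) :
    ((3/4)*(X/A)) * (s⁻¹ * (e/((2*q-1)*m))) + (X/B) * (s⁻¹ * (e/m)) ≤ 0.2/(q*m) * X * e := by
  have h2q : (0:ℝ) < 2*q-1 := by linarith
  have hs0 : (0:ℝ) < s := by linarith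
  have hq0 : (0:ℝ) < q := by linarith
  have key : ((3/4)*(X/A)) * (s⁻¹ * (e/((2*q-1)*m))) + (X/B) * (s⁻¹ * (e/m))
      = s⁻¹ * (e*X/(q*m)) * ((3/4)*q/(A*(2*q-1)) + q/B) := by
    field_simp
  rw [key]
  calc s⁻¹ * (e*X/(q*m)) * ((3/4)*q/(A*(2*q-1)) + q/B)
      ≤ s⁻¹ * (e*X/(q*m)) * (1/2) := by
        apply mul_le_mul_of_nonneg_left hN (by positivity)
    _ ≤ 0.2/(q*m) * X * e := by
        rw [show s⁻¹ * (e*X/(q*m)) * (1/2) = (s⁻¹*(1/2)) * (e*X/(q*m)) by ring,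
          show (0.2:ℝ)/(q*m)*X*e = 0.2 * (e*X/(q*m)) by ring]
        apply mul_le_mul_of_nonneg_right _ (by positivity)
        rw [inv_mul_le_iff₀ hs0]
        nlinarith [hs]

theorem stmt15 (m q : ℝ) (hm : 1 / 80 ≤ m) (hq : 1 ≤ q)
    (πmix μ : ℝ → ℝ)
    (hπ : πmix = fun x => (1 / 2) * gaussDensity (-m) x + (1 / 2) * gaussDensity m x)
    (hμ : μ = fun x => (3 / 4) * gaussDensity (-m) x + (1 / 4) * gaussDensity m x) :
    ∫ x, |deriv (fun y => Real.log (πmix y / μ y)) x| ^ q * μ x ≤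
      (0.2 / (q * m)) * (4 * m) ^ q * Real.exp (-m ^ 2 / 2) := by
  have hm0 : (0:ℝ) < m := by linarith
  have hq0 : (0:ℝ) < q := by linarith
  have hb : (0:ℝ) < (2*q-1)*m := by nlinarith
  -- closed form for the function under deriv
  have hfun : (fun y => Real.log (πmix y / μ y))
      = fun y => Real.log (2*(1+Real.exp (2*m*y))/(3+Real.exp (2*m*y))) := by
    funext y
    rw [hπ, hμ]
    simp only [gauss_flip m y]
    congr 1
    have hgp : 0 < gaussDensity (-m) y := gauss_pos _ _
    have hEp : 0 < Real.exp (2*m*y) := Real.exp_pos _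
    have hden : (0:ℝ) < 3 / 4 * gaussDensity (-m) y + 1 / 4 * (Real.exp (2*m*y) * gaussDensity (-m) y) := by
      nlinarith
    have h3E : (0:ℝ) < 3 + Real.exp (2*m*y) := by positivity
    rw [div_eq_div_iff hden.ne' h3E.ne']
    ring
  have hig : ∀ x, |deriv (fun y => Real.log (πmix y / μ y)) x| ^ q * μ x
      = (4*m*Real.exp (2*m*x)/((1+Real.exp (2*m*x))*(3+Real.exp (2*m*x))))^q
        * ((3/4) * gaussDensity (-m) x + (1/4) * gaussDensity m x) := by
    intro x
    rw [hfun, deriv_logratio, abs_of_nonneg (by positivity), hμ]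
  -- dominating function
  set c1 : ℝ := (3/4)*(4*m/3)^q with hc1
  set c2 : ℝ := m^q with hc2
  have hc1p : 0 < c1 := by rw [hc1]; positivity
  have hc2p : 0 < c2 := by rw [hc2]; positivity
  have hint1 : Integrable (fun x : ℝ => c1 * (Real.exp (2*m*q*x) * gaussDensity (-m) x)) :=
    (f1_integrable m q).const_mul c1
  have hint2 : Integrable (fun x : ℝ => c2 * gaussDensity (-m) x) :=
    (gauss_integrable (-m)).const_mul c2
  have hGint : Integrable (fun x : ℝ =>
      (Iic (0:ℝ)).indicator (fun x => c1 * (Real.exp (2*m*q*x) * gaussDensity (-m) x)) x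
      + (Ioi (0:ℝ)).indicator (fun x => c2 * gaussDensity (-m) x) x) :=
    (hint1.indicator measurableSet_Iic).add (hint2.indicator measurableSet_Ioi)
  have hptwise : ∀ x, |deriv (fun y => Real.log (πmix y / μ y)) x| ^ q * μ x
      ≤ (Iic (0:ℝ)).indicator (fun x => c1 * (Real.exp (2*m*q*x) * gaussDensity (-m) x)) x
        + (Ioi (0:ℝ)).indicator (fun x => c2 * gaussDensity (-m) x) x := by
    intro x
    rw [hig x]
    have hpb := pointwise_bound m q x hm0 hq
    rcases le_or_gt x 0 with hx | hx
    · rw [indicator_of_mem (mem_Iic.mpr hx), indicator_of_notMem (by simpa using not_lt.mpr hx)]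
      rw [if_pos hx] at hpb
      rw [hc1]
      linarith [hpb]
    · rw [indicator_of_notMem (by simpa using hx), indicator_of_mem (mem_Ioi.mpr hx)]
      rw [if_neg (not_le.mpr hx)] at hpb
      rw [hc2]
      linarith [hpb]
  -- integral bounds for the two pieces
  have B1 : ∫ x in Iic (0:ℝ), Real.exp (2*m*q*x) * gaussDensity (-m) x
      ≤ (Real.sqrt (2*Real.pi))⁻¹ * (Real.exp (-m^2/2)/((2*q-1)*m)) := by
    simp_rw [gauss_shift m q, MeasureTheory.integral_const_mul]
    have ht := tail_le_Iic ((2*q-1)*m) hb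
    calc ((Real.sqrt (2*Real.pi))⁻¹ * Real.exp ((((2*q-1)*m)^2-m^2)/2))
          * ∫ x in Iic (0:ℝ), Real.exp (-(x-(2*q-1)*m)^2/2)
        ≤ ((Real.sqrt (2*Real.pi))⁻¹ * Real.exp ((((2*q-1)*m)^2-m^2)/2))
          * (Real.exp (-((2*q-1)*m)^2/2)/((2*q-1)*m)) := by
          apply mul_le_mul_of_nonneg_left ht (by positivity)
      _ = (Real.sqrt (2*Real.pi))⁻¹ * (Real.exp (-m^2/2)/((2*q-1)*m)) := by
          rw [show ((Real.sqrt (2*Real.pi))⁻¹ * Real.exp ((((2*q-1)*m)^2-m^2)/2))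
              * (Real.exp (-((2*q-1)*m)^2/2)/((2*q-1)*m))
            = (Real.sqrt (2*Real.pi))⁻¹
              * ((Real.exp ((((2*q-1)*m)^2-m^2)/2) * Real.exp (-((2*q-1)*m)^2/2))/((2*q-1)*m)) by ring,
            ← Real.exp_add]
          congr 3
          ring
  have B2 : ∫ x in Ioi (0:ℝ), gaussDensity (-m) x
      ≤ (Real.sqrt (2*Real.pi))⁻¹ * (Real.exp (-m^2/2)/m) := by
    have heq : ∀ x : ℝ, gaussDensity (-m) x = (Real.sqrt (2*Real.pi))⁻¹ * Real.exp (-(x+m)^2/2) := by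
      intro x; unfold gaussDensity; rw [sub_neg_eq_add]
    simp_rw [heq, MeasureTheory.integral_const_mul]
    exact mul_le_mul_of_nonneg_left (tail_le m hm0) (by positivity)
  -- assemble
  calc ∫ x, |deriv (fun y => Real.log (πmix y / μ y)) x| ^ q * μ x
      ≤ ∫ x, ((Iic (0:ℝ)).indicator (fun x => c1 * (Real.exp (2*m*q*x) * gaussDensity (-m) x)) x
          + (Ioi (0:ℝ)).indicator (fun x => c2 * gaussDensity (-m) x) x) := by
        apply integral_mono_of_nonneg (Filter.Eventually.of_forall fun x =>
          mul_nonneg (Real.rpow_nonneg (abs_nonneg _) q)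
            (by rw [hμ]; nlinarith [gauss_pos (-m) x, gauss_pos m x])) hGint
          (Filter.Eventually.of_forall hptwise)
    _ = (∫ x in Iic (0:ℝ), c1 * (Real.exp (2*m*q*x) * gaussDensity (-m) x))
        + ∫ x in Ioi (0:ℝ), c2 * gaussDensity (-m) x := by
        rw [MeasureTheory.integral_add (hint1.indicator measurableSet_Iic)
          (hint2.indicator measurableSet_Ioi),
          MeasureTheory.integral_indicator measurableSet_Iic,
          MeasureTheory.integral_indicator measurableSet_Ioi]
    _ = c1 * (∫ x in Iic (0:ℝ), Real.exp (2*m*q*x) * gaussDensity (-m) x)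
        + c2 * ∫ x in Ioi (0:ℝ), gaussDensity (-m) x := by
        rw [MeasureTheory.integral_const_mul, MeasureTheory.integral_const_mul]
    _ ≤ c1 * ((Real.sqrt (2*Real.pi))⁻¹ * (Real.exp (-m^2/2)/((2*q-1)*m)))
        + c2 * ((Real.sqrt (2*Real.pi))⁻¹ * (Real.exp (-m^2/2)/m)) :=
        add_le_add (mul_le_mul_of_nonneg_left B1 hc1p.le) (mul_le_mul_of_nonneg_left B2 hc2p.le)
    _ ≤ (0.2 / (q * m)) * (4 * m) ^ q * Real.exp (-m ^ 2 / 2) := by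
        have hc1eq : c1 = (3/4)*((4*m)^q/(3:ℝ)^q) := by
          rw [hc1, Real.div_rpow (by positivity) (by norm_num)]
        have hc2eq : c2 = (4*m)^q/(4:ℝ)^q := by
          rw [hc2, show (4:ℝ)*m = 4*m from rfl]
          rw [Real.mul_rpow (by norm_num) hm0.le]
          field_simp
        rw [hc1eq, hc2eq]
        exact final_num q m (Real.exp (-m^2/2)) (Real.sqrt (2*Real.pi)) ((3:ℝ)^q) ((4:ℝ)^q)
          ((4*m)^q) hq hm0 (Real.exp_pos _) sqrt_two_pi_ge (by positivity) (by positivity)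
          (Real.rpow_pos_of_pos (by linarith) q) (numeric_bound q hq)
end
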